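/- arXiv:math/0603364 — 9 statements merged into one kernel-verified Lean document; each statement's English description precedes it below -/
import Mathlib

section
/- Let K be a finite field of characteristic 2, F a proper subfield of K, V a finite-dimensional K-vector space of odd dimension, Q : V → K a non-degenerate quadratic form (so that its polar form f_Q is degenerate with one-dimensional radical), and L : K → F an F-linear map. Then the quadratic form LQ = L∘Q : V → F is degenerate. -/
open Module Matrix

/-- The generic alternating (skew-symmetric with zero diagonal) matrix over
`MvPolynomial (Fin m × Fin m) ℤ`. -/
noncomputable def genAltMatrix (m : ℕ) :
    Matrix (Fin m) (Fin m) (MvPolynomial (Fin m × Fin m) ℤ) :=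
  Matrix.of fun i j =>
    if i < j then MvPolynomial.X (i, j) else if j < i then -MvPolynomial.X (j, i) else 0

/-- A symmetric matrix with zero diagonal ("alternating") of odd size over a field of
characteristic 2 has zero determinant.  Proof: lift to the generic skew-symmetric matrix
over `MvPolynomial _ ℤ`, whose determinant vanishes since `d = -d` forces `d = 0` there. -/
lemma det_eq_zero_of_symm_diagZero {K : Type*} [Field K] [CharP K 2] {m : ℕ} (hm : Odd m)
    (A : Matrix (Fin m) (Fin m) K) (hsymm : ∀ i j, A i j = A j i) (hdiag : ∀ i, A i i = 0) :
    A.det = 0 := by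
  classical
  set M := genAltMatrix m with hM
  have hentry : ∀ i j, M i j =
      if i < j then MvPolynomial.X (i, j) else if j < i then -MvPolynomial.X (j, i) else 0 :=
    fun i j => rfl
  have hMT : Mᵀ = -M := by
    ext i j
    rw [Matrix.transpose_apply, Matrix.neg_apply, hentry, hentry]
    rcases lt_trichotomy i j with h | h | h
    · simp [h, h.not_gt]
    · simp [h, lt_irrefl]
    · simp [h, h.not_gt]
  have hdetM : M.det = 0 := by
    have h1 : M.det = -M.det := by
      conv_lhs => rw [← Matrix.det_transpose, hMT]
      rw [Matrix.det_neg, Fintype.card_fin, hm.neg_one_pow, neg_one_mul]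
    have h2 : (2 : MvPolynomial (Fin m × Fin m) ℤ) * M.det = 0 := by
      rw [two_mul]
      nth_rewrite 1 [h1]
      rw [neg_add_cancel]
    rcases mul_eq_zero.mp h2 with h | h
    · exact absurd h two_ne_zero
    · exact h
  let φ : MvPolynomial (Fin m × Fin m) ℤ →+* K :=
    MvPolynomial.eval₂Hom (Int.castRingHom K) (fun p => A p.1 p.2)
  have hneg : ∀ x : K, -x = x := fun x => CharTwo.neg_eq x
  have hmap : M.map φ = A := by
    ext i j
    rw [Matrix.map_apply, hentry]
    rcases lt_trichotomy i j with h | h | h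
    · simp [h, φ]
    · simp [h, lt_irrefl, hdiag]
    · simp only [h.not_gt, h, if_true, if_false, map_neg]
      rw [show φ (MvPolynomial.X (j, i)) = A j i by simp [φ], hneg, hsymm]
  calc A.det = (M.map φ).det := by rw [hmap]
    _ = φ M.det := (RingHom.map_det φ M).symm
    _ = 0 := by rw [hdetM, map_zero]

/-- Let `K` be a finite field of characteristic `2`, `F` a proper
subfield of `K`, `V` a finite-dimensional `K`-vector space of odd dimension,
`Q : V → K` a non-degenerate quadratic form, and `L : K → F` an `F`-linear map.
Then the quadratic form `LQ = L ∘ Q : V → F` is degenerate. -/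
theorem stmt_2 {K : Type*} [Field K] [Fintype K] (hchar : ringChar K = 2)
    {V : Type*} [AddCommGroup V] [Module K V] [FiniteDimensional K V]
    (hodd : Odd (Module.finrank K V))
    (F : Subfield K) (hF : F ≠ ⊤)
    (Q : QuadraticForm K V)
    (hQnd : ∀ u : V, Q u = 0 → (∀ v : V, QuadraticMap.polar ⇑Q u v = 0) → u = 0)
    (L : K → F)
    (hLadd : ∀ x y : K, L (x + y) = L x + L y)
    (hLsmul : ∀ (c : F) (x : K), L ((c : K) * x) = c * L x) :
    ¬ (∀ u : V, L (Q u) = 0 → (∀ v : V, L (QuadraticMap.polar ⇑Q u v) = 0) → u = 0) := by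
  classical
  haveI : CharP K 2 := by rw [← hchar]; exact ringChar.charP K
  intro h
  -- Step 1: the polar form has a nonzero radical vector `u₀`.
  set b := Module.finBasis K V with hb
  have hdet : (LinearMap.BilinForm.toMatrix b (QuadraticMap.polarBilin Q)).det = 0 := by
    apply det_eq_zero_of_symm_diagZero hodd
    · intro i j
      simp only [LinearMap.BilinForm.toMatrix_apply, QuadraticMap.polarBilin_apply_apply]
      exact QuadraticMap.polar_comm _ _ _
    · intro i
      simp only [LinearMap.BilinForm.toMatrix_apply, QuadraticMap.polarBilin_apply_apply]
      rw [QuadraticMap.polar_self]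
      exact CharTwo.two_nsmul _
  have hnd : ¬ LinearMap.BilinForm.Nondegenerate (QuadraticMap.polarBilin Q) := by
    rw [LinearMap.BilinForm.nondegenerate_iff_det_ne_zero b]
    exact fun hne => hne hdet
  have hnd' : ¬ ∀ m : V, (∀ n : V, QuadraticMap.polarBilin Q m n = 0) → m = 0 :=
    fun hl => hnd (LinearMap.BilinForm.Nondegenerate.ofSeparatingLeft hl)
  push_neg at hnd'
  obtain ⟨u₀, hpol0, hu₀ne⟩ := hnd'
  have hpol : ∀ v : V, QuadraticMap.polar ⇑Q u₀ v = 0 := fun v => by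
    have := hpol0 v
    rwa [QuadraticMap.polarBilin_apply_apply] at this
  have hQu₀ : Q u₀ ≠ 0 := fun h0 => hu₀ne (hQnd u₀ h0 hpol)
  -- Step 2: `L` kills some nonzero `z : K`.
  have hL0 : L 0 = 0 := by
    have h00 := hLadd 0 0
    rw [add_zero] at h00
    exact left_eq_add.mp h00
  obtain ⟨k, hk⟩ : ∃ k : K, k ∉ F := by
    by_contra hc
    push_neg at hc
    exact hF (Subfield.ext fun x => by simp [hc x])
  have hcard : Fintype.card F < Fintype.card K :=
    Fintype.card_lt_of_injective_of_notMem ((↑) : F → K) Subtype.coe_injective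
      (b := k) (by rintro ⟨a, rfl⟩; exact hk a.2)
  obtain ⟨x, y, hxy, hLxy⟩ := Fintype.exists_ne_map_eq_of_card_lt L hcard
  set z := x - y with hz
  have hzne : z ≠ 0 := sub_ne_zero.mpr hxy
  have hLz : L z = 0 := by
    have hx : L (y + z) = L y + L z := hLadd y z
    rw [hz, add_sub_cancel] at hx
    rw [hLxy] at hx
    exact left_eq_add.mp hx
  -- Step 3: squaring is surjective on `K`.
  haveI : ExpChar K 2 := ExpChar.prime Nat.prime_two
  have hsq : Function.Surjective (fun a : K => a ^ 2) := by
    apply Finite.surjective_of_injective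
    intro a c hac
    have hfc : frobenius K 2 a = frobenius K 2 c := by
      rw [frobenius_def, frobenius_def]; exact hac
    exact (frobenius K 2).injective hfc
  obtain ⟨a, ha0⟩ := hsq (z / Q u₀)
  have ha : a ^ 2 = z / Q u₀ := ha0
  have hane : a ≠ 0 := by
    intro h0
    rw [h0, zero_pow (by norm_num), eq_comm, div_eq_zero_iff] at ha
    rcases ha with h' | h'
    · exact hzne h'
    · exact hQu₀ h'
  -- Step 4: `u = a • u₀` contradicts the hypothesis `h`.
  set u := a • u₀ with hu
  have hQu : Q u = z := by
    rw [hu, QuadraticMap.map_smul, smul_eq_mul, ← pow_two, ha, div_mul_cancel₀ _ hQu₀]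
  have h1 : L (Q u) = 0 := by rw [hQu]; exact hLz
  have h2 : ∀ v : V, L (QuadraticMap.polar ⇑Q u v) = 0 := by
    intro v
    rw [hu, QuadraticMap.polar_smul_left, hpol v, smul_zero]
    exact hL0
  exact smul_ne_zero hane hu₀ne (h u h1 h2)
end

section
/- Let K be a finite field of characteristic 2, F a subfield of K, V a vector space over K, β : V×V → K a symmetric bilinear form which is not alternating, and L : K → F a nonzero F-linear map. Then Lβ = L∘β is a symmetric F-bilinear form on V (regarded as an F-vector space) which is not alternating. -/
/-!
Linearity and symmetry pass through `L` directly. For non-alternation, scaling `v` by `a`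
scales `β v v` by `a²`; since every element of a finite field of characteristic `2` is a
square, a single `v` with `β v v ≠ 0` makes `v ↦ β v v` surjective onto `K`, so it hits
some `x` with `L x ≠ 0`.
-/

theorem exists_apply_self_eq_of_isSquare {K V : Type*} [Field K] [AddCommGroup V] [Module K V]
    (β : V → V → K)
    (hsmul₁ : ∀ (a : K) (v w : V), β (a • v) w = a * β v w)
    (hsmul₂ : ∀ (a : K) (v w : V), β v (a • w) = a * β v w)
    (hsq : ∀ x : K, IsSquare x) {v : V} (hv : β v v ≠ 0) (x : K) :
    ∃ w : V, β w w = x := by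
  obtain ⟨a, ha⟩ := hsq (x / β v v)
  refine ⟨a • v, ?_⟩
  rw [hsmul₁, hsmul₂, ← mul_assoc, ← ha, div_mul_cancel₀ x hv]

/-- Let `K` be a finite field of characteristic `2`, `F` a subfield of
`K`, `V` a vector space over `K`, `β : V × V → K` a symmetric bilinear form which is not
alternating, and `L : K → F` a nonzero `F`-linear map.  Then `Lβ = L ∘ β` is a symmetric
`F`-bilinear form on `V` (regarded as an `F`-vector space) which is not alternating. -/
theorem stmt_3 {K : Type*} [Field K] [Fintype K] (hchar : ringChar K = 2)
    (F : Subfield K) {V : Type*} [AddCommGroup V] [Module K V]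
    (β : V → V → K)
    (hβadd₁ : ∀ u v w : V, β (u + v) w = β u w + β v w)
    (hβadd₂ : ∀ u v w : V, β u (v + w) = β u v + β u w)
    (hβsmul₁ : ∀ (a : K) (v w : V), β (a • v) w = a * β v w)
    (hβsmul₂ : ∀ (a : K) (v w : V), β v (a • w) = a * β v w)
    (hβsym : ∀ v w : V, β v w = β w v)
    (hβnalt : ¬ (∀ v : V, β v v = 0))
    (L : K → F)
    (hLadd : ∀ x y : K, L (x + y) = L x + L y)
    (hLsmul : ∀ (c : F) (x : K), L ((c : K) * x) = c * L x)
    (hL0 : ∃ x : K, L x ≠ 0) :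
    (∀ u v w : V, L (β (u + v) w) = L (β u w) + L (β v w)) ∧
    (∀ u v w : V, L (β u (v + w)) = L (β u v) + L (β u w)) ∧
    (∀ (c : F) (v w : V), L (β ((c : K) • v) w) = c * L (β v w)) ∧
    (∀ (c : F) (v w : V), L (β v ((c : K) • w)) = c * L (β v w)) ∧
    (∀ v w : V, L (β v w) = L (β w v)) ∧
    ¬ (∀ v : V, L (β v v) = 0) := by
  refine ⟨fun u v w => by rw [hβadd₁, hLadd], fun u v w => by rw [hβadd₂, hLadd],
    fun c v w => by rw [hβsmul₁, hLsmul], fun c v w => by rw [hβsmul₂, hLsmul],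
    fun v w => by rw [hβsym v w], fun hLβalt => ?_⟩
  obtain ⟨v, hv⟩ := not_forall.mp hβnalt
  obtain ⟨x, hx⟩ := hL0
  obtain ⟨w, rfl⟩ := exists_apply_self_eq_of_isSquare β hβsmul₁ hβsmul₂
    (FiniteField.isSquare_of_char_two hchar) hv x
  exact hx (hLβalt w)
end

section
/- Let K be a finite field of characteristic 2, σ an automorphism of K of order 2, F a subfield of K with σ(F)=F, V a vector space over K, β : V×V → K a nonzero hermitian form with respect to σ, and L : K → F a nonzero F-linear map. Then the form Lβ = L∘β : V×V → F is alternating if and only if F ⊆ Fix(σ) and L∘σ = L. -/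
/-!
Expanding `β (v + w) (v + w)` shows that if `L ∘ β` is alternating then `L` kills every
`β v w + σ (β v w)`, and `β v w` takes every value in `K` by semilinearity once `β ≠ 0`.
In characteristic `2` this says `L ∘ σ = L`; then for `c ∈ F` we get
`σ c * L x = L (σ (c * σ x)) = c * L x`, so `σ` fixes `F`. Conversely `β v v` is fixed by `σ`,
hence a trace `x + σ x` (because `σ ≠ id`), and `L (x + σ x) = 2 • L x = 0`.
-/

section Involution

variable {K : Type*} [Field K] {σ : K ≃+* K}

theorem exists_add_apply_ne_zero (hσ : σ ≠ RingEquiv.refl K) : ∃ t : K, t + σ t ≠ 0 := by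
  by_cases h2 : (2 : K) = 0
  · obtain ⟨t, ht⟩ : ∃ t, σ t ≠ t := by
      by_contra! h
      exact hσ (RingEquiv.ext h)
    refine ⟨t, fun h => ht ?_⟩
    linear_combination h - t * h2
  · exact ⟨1, by rwa [map_one, one_add_one_eq_two]⟩

theorem exists_add_apply_eq (hσ2 : ∀ x, σ (σ x) = x) (hσ : σ ≠ RingEquiv.refl K) {d : K}
    (hd : σ d = d) : ∃ x, x + σ x = d := by
  obtain ⟨t, ht⟩ := exists_add_apply_ne_zero hσ
  have hσs : σ (t + σ t) = t + σ t := by rw [map_add, hσ2, add_comm]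
  refine ⟨d * t / (t + σ t), ?_⟩
  rw [map_div₀, hσs, map_mul, hd, ← add_div, ← mul_add, mul_div_cancel_right₀ _ ht]

end Involution

section Hermitian

variable {K V : Type*} [Field K] {σ : K ≃+* K} {β : V → V → K}

theorem hermitian_apply_add_add [Add V] (hβadd₁ : ∀ u v w : V, β (u + v) w = β u w + β v w)
    (hβadd₂ : ∀ u v w : V, β u (v + w) = β u v + β u w) (hβherm : ∀ v w : V, β w v = σ (β v w))
    (v w : V) : β (v + w) (v + w) = β v v + β w w + (β v w + σ (β v w)) := by
  rw [hβadd₁, hβadd₂, hβadd₂, ← hβherm]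
  ring

theorem surjective_apply_of_ne_zero [AddCommGroup V] [Module K V] (hσ2 : ∀ x, σ (σ x) = x)
    (hβsmul₂ : ∀ (a : K) (v w : V), β v (a • w) = σ a * β v w) {v w : V} (h : β v w ≠ 0) :
    Function.Surjective (β v) := fun x =>
  ⟨σ (x / β v w) • w, by rw [hβsmul₂, hσ2, div_mul_cancel₀ _ h]⟩

end Hermitian

section Functional

variable {K : Type*} [Field K] {σ : K ≃+* K} {F : Subfield K} {L : K → F}

theorem apply_coe_eq_self (hσ2 : ∀ x, σ (σ x) = x) (hσF : ∀ x : K, σ x ∈ F ↔ x ∈ F)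
    (hLsmul : ∀ (c : F) (x : K), L ((c : K) * x) = c * L x) (hL0 : ∃ x : K, L x ≠ 0)
    (hLσ : ∀ x : K, L (σ x) = L x) (c : F) : σ c = c := by
  obtain ⟨x, hx⟩ := hL0
  have key : (⟨σ c, (hσF c).2 c.2⟩ : F) * L x = c * L x :=
    calc _ = L (σ (c * σ x)) := by rw [← hLsmul, map_mul, hσ2]
      _ = _ := by rw [hLσ, hLsmul, hLσ]
  exact congrArg Subtype.val (mul_right_cancel₀ hx key)

theorem map_add_apply_eq_zero_of_forall_map_self_eq_zero {V : Type*} [AddCommGroup V]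
    [Module K V] {β : V → V → K} (hσ2 : ∀ x, σ (σ x) = x)
    (hβadd₁ : ∀ u v w : V, β (u + v) w = β u w + β v w)
    (hβadd₂ : ∀ u v w : V, β u (v + w) = β u v + β u w)
    (hβsmul₂ : ∀ (a : K) (v w : V), β v (a • w) = σ a * β v w)
    (hβherm : ∀ v w : V, β w v = σ (β v w)) (hβne : ∃ v w : V, β v w ≠ 0)
    (hLadd : ∀ x y : K, L (x + y) = L x + L y) (halt : ∀ v : V, L (β v v) = 0) (x : K) :
    L x + L (σ x) = 0 := by
  obtain ⟨v, w, h⟩ := hβne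
  obtain ⟨w', rfl⟩ := surjective_apply_of_ne_zero hσ2 hβsmul₂ h x
  have := halt (v + w')
  rwa [hermitian_apply_add_add hβadd₁ hβadd₂ hβherm, hLadd, hLadd, halt, halt, zero_add,
    zero_add, hLadd] at this

theorem map_eq_zero_of_apply_eq_self [CharP K 2] (hσ2 : ∀ x, σ (σ x) = x)
    (hσ : σ ≠ RingEquiv.refl K) (hLadd : ∀ x y : K, L (x + y) = L x + L y)
    (hLσ : ∀ x : K, L (σ x) = L x) {d : K} (hd : σ d = d) : L d = 0 := by
  obtain ⟨x, rfl⟩ := exists_add_apply_eq hσ2 hσ hd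
  rw [hLadd, hLσ, CharTwo.add_self_eq_zero]

end Functional

theorem stmt_5_general {K : Type*} [Field K] (hchar : ringChar K = 2)
    (σ : K ≃+* K) (hσ2 : ∀ x : K, σ (σ x) = x) (hσne : σ ≠ RingEquiv.refl K)
    (F : Subfield K) (hσF : ∀ x : K, σ x ∈ F ↔ x ∈ F)
    {V : Type*} [AddCommGroup V] [Module K V]
    (β : V → V → K)
    (hβadd₁ : ∀ u v w : V, β (u + v) w = β u w + β v w)
    (hβadd₂ : ∀ u v w : V, β u (v + w) = β u v + β u w)
    (hβsmul₂ : ∀ (a : K) (v w : V), β v (a • w) = σ a * β v w)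
    (hβherm : ∀ v w : V, β w v = σ (β v w))
    (hβne : ∃ v w : V, β v w ≠ 0)
    (L : K → F)
    (hLadd : ∀ x y : K, L (x + y) = L x + L y)
    (hLsmul : ∀ (c : F) (x : K), L ((c : K) * x) = c * L x)
    (hL0 : ∃ x : K, L x ≠ 0) :
    (∀ v : V, L (β v v) = 0) ↔
      ((∀ x : K, x ∈ F → σ x = x) ∧ ∀ x : K, L (σ x) = L x) := by
  have : CharP K 2 := hchar ▸ ringChar.charP K
  constructor
  · intro halt
    have hLσ : ∀ x : K, L (σ x) = L x := fun x =>
      (CharTwo.add_eq_zero.1 <| map_add_apply_eq_zero_of_forall_map_self_eq_zero hσ2 hβadd₁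
        hβadd₂ hβsmul₂ hβherm hβne hLadd halt x).symm
    exact ⟨fun c hc => apply_coe_eq_self hσ2 hσF hLsmul hL0 hLσ ⟨c, hc⟩, hLσ⟩
  · rintro ⟨-, hLσ⟩ v
    exact map_eq_zero_of_apply_eq_self hσ2 hσne hLadd hLσ (hβherm v v).symm

/-- Let `K` be a finite field of characteristic `2`, `σ` an automorphism
of `K` of order `2`, `F` a subfield of `K` with `σ(F) = F`, `V` a vector space over `K`,
`β : V × V → K` a nonzero hermitian form with respect to `σ`, and `L : K → F` a nonzero
`F`-linear map.  Then the form `Lβ = L ∘ β : V × V → F` is alternating if and only if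
`F ⊆ Fix(σ)` and `L ∘ σ = L`. -/
theorem stmt_5 {K : Type*} [Field K] [Fintype K] (hchar : ringChar K = 2)
    (σ : K ≃+* K) (hσ2 : ∀ x : K, σ (σ x) = x) (hσne : σ ≠ RingEquiv.refl K)
    (F : Subfield K) (hσF : ∀ x : K, σ x ∈ F ↔ x ∈ F)
    {V : Type*} [AddCommGroup V] [Module K V]
    (β : V → V → K)
    (hβadd₁ : ∀ u v w : V, β (u + v) w = β u w + β v w)
    (hβadd₂ : ∀ u v w : V, β u (v + w) = β u v + β u w)
    (hβsmul₁ : ∀ (a : K) (v w : V), β (a • v) w = a * β v w)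
    (hβsmul₂ : ∀ (a : K) (v w : V), β v (a • w) = σ a * β v w)
    (hβherm : ∀ v w : V, β w v = σ (β v w))
    (hβne : ∃ v w : V, β v w ≠ 0)
    (L : K → F)
    (hLadd : ∀ x y : K, L (x + y) = L x + L y)
    (hLsmul : ∀ (c : F) (x : K), L ((c : K) * x) = c * L x)
    (hL0 : ∃ x : K, L x ≠ 0) :
    (∀ v : V, L (β v v) = 0) ↔
      ((∀ x : K, x ∈ F → σ x = x) ∧ ∀ x : K, L (σ x) = L x) :=
  stmt_5_general hchar σ hσ2 hσne F hσF β hβadd₁ hβadd₂ hβsmul₂ hβherm hβne L hLadd hLsmul hL0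
end

section
/- Let K be a field, σ an automorphism of K of order 2, F a subfield of K with σ(F)=F but F not contained in Fix(σ), V a vector space over K, β : V×V → K a nonzero hermitian form with respect to σ, and L : K → F a nonzero F-linear map. Then the σ|_F-sesquilinear form Lβ = L∘β over F is hermitian (with respect to the restriction of σ to F) if and only if L∘σ = σ∘L as maps K → F; and Lβ is neither symmetric, alternating, nor hermitian if and only if L∘σ ≠ σ∘L. -/
/-!
Since `β` is nonzero and `K`-linear in its first argument, every `y : K` is a value `β p q`,
and then `β q p = σ y`. So each of the three properties of `Lβ` becomes a property of `L`:
hermitian means `L ∘ σ = σ ∘ L`, symmetric means `L ∘ σ = L`, alternating means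
`L ∘ σ = -L`. The last two are impossible: if `L ∘ σ = e • L` for a scalar `e ∈ F`, then
comparing `L (σ (c x))` computed both ways for some `c ∈ F` with `σ c ≠ c` forces `σ c = c`.
-/

section LinearFunctional

variable {K : Type*} [Field K] (σ : K ≃+* K) (F : Subfield K)

theorem not_forall_map_sigma_eq_mul {c : K} (hcF : c ∈ F) (hσcF : σ c ∈ F) (hc : σ c ≠ c)
    (L : K → F) (hLsmul : ∀ (a : F) (x : K), L ((a : K) * x) = a * L x)
    (hL0 : ∃ x : K, L x ≠ 0) (e : F) : ¬ ∀ y : K, L (σ y) = e * L y := by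
  intro hL
  obtain ⟨x, hx⟩ := hL0
  have he : e ≠ 0 := by
    rintro rfl
    apply hx
    simpa using hL (σ.symm x)
  have key : (⟨σ c, hσcF⟩ : F) * (e * L x) = e * ((⟨c, hcF⟩ : F) * L x) := by
    rw [← hL x, ← hLsmul ⟨σ c, hσcF⟩, ← hLsmul ⟨c, hcF⟩, ← hL, map_mul]
  have : (⟨σ c, hσcF⟩ : F) = ⟨c, hcF⟩ :=
    mul_right_cancel₀ (mul_ne_zero he hx) (by linear_combination key)
  exact hc (congrArg Subtype.val this)

end LinearFunctional

section HermitianForm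

variable {K : Type*} [Field K] {σ : K ≃+* K} {V : Type*} [AddCommGroup V] [Module K V]
  {β : V → V → K}

theorem exists_apply_eq_of_ne_zero (hβsmul₁ : ∀ (a : K) (v w : V), β (a • v) w = a * β v w)
    (hβne : ∃ v w : V, β v w ≠ 0) (y : K) : ∃ p q : V, β p q = y := by
  obtain ⟨v, w, hvw⟩ := hβne
  exact ⟨(y * (β v w)⁻¹) • v, w, by rw [hβsmul₁]; field_simp⟩

variable (hβsmul₁ : ∀ (a : K) (v w : V), β (a • v) w = a * β v w)
  (hβherm : ∀ v w : V, β w v = σ (β v w)) (hβne : ∃ v w : V, β v w ≠ 0)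
include hβsmul₁ hβherm hβne

theorem hermitian_iff_map_sigma_comm (F : Subfield K) (L : K → F) :
    (∀ v w : V, (L (β w v) : K) = σ (L (β v w) : K)) ↔
      ∀ x : K, (L (σ x) : K) = σ (L x : K) := by
  refine ⟨fun h x => ?_, fun h v w => hβherm v w ▸ h _⟩
  obtain ⟨p, q, rfl⟩ := exists_apply_eq_of_ne_zero hβsmul₁ hβne x
  rw [← hβherm]
  exact h p q

theorem map_sigma_eq_of_symmetric {F : Type*} (L : K → F)
    (hsymm : ∀ v w : V, L (β w v) = L (β v w)) (y : K) : L (σ y) = L y := by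
  obtain ⟨p, q, rfl⟩ := exists_apply_eq_of_ne_zero hβsmul₁ hβne y
  rw [← hβherm, hsymm]

theorem map_sigma_eq_neg_of_alternating {F : Type*} [AddGroup F] (L : K → F)
    (hβadd₁ : ∀ u v w : V, β (u + v) w = β u w + β v w)
    (hβadd₂ : ∀ u v w : V, β u (v + w) = β u v + β u w)
    (hLadd : ∀ x y : K, L (x + y) = L x + L y) (halt : ∀ v : V, L (β v v) = 0) (y : K) :
    L (σ y) = -L y := by
  obtain ⟨p, q, rfl⟩ := exists_apply_eq_of_ne_zero hβsmul₁ hβne y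
  have h := halt (p + q)
  rw [hβadd₁, hβadd₂, hβadd₂, hLadd, hLadd, hLadd, halt p, halt q, zero_add, add_zero] at h
  rw [← hβherm]
  exact eq_neg_of_add_eq_zero_right h

end HermitianForm

theorem stmt_6_general {K : Type*} [Field K]
    (σ : K ≃+* K)
    (F : Subfield K) (hσF : ∀ x : K, σ x ∈ F ↔ x ∈ F)
    (hFnotfix : ¬ (∀ x : K, x ∈ F → σ x = x))
    {V : Type*} [AddCommGroup V] [Module K V]
    (β : V → V → K)
    (hβadd₁ : ∀ u v w : V, β (u + v) w = β u w + β v w)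
    (hβadd₂ : ∀ u v w : V, β u (v + w) = β u v + β u w)
    (hβsmul₁ : ∀ (a : K) (v w : V), β (a • v) w = a * β v w)
    (hβherm : ∀ v w : V, β w v = σ (β v w))
    (hβne : ∃ v w : V, β v w ≠ 0)
    (L : K → F)
    (hLadd : ∀ x y : K, L (x + y) = L x + L y)
    (hLsmul : ∀ (c : F) (x : K), L ((c : K) * x) = c * L x)
    (hL0 : ∃ x : K, L x ≠ 0) :
    ((∀ v w : V, (L (β w v) : K) = σ (L (β v w) : K)) ↔
      (∀ x : K, (L (σ x) : K) = σ (L x : K))) ∧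
    ((¬ (∀ v w : V, L (β w v) = L (β v w)) ∧
      ¬ (∀ v : V, L (β v v) = 0) ∧
      ¬ (∀ v w : V, (L (β w v) : K) = σ (L (β v w) : K))) ↔
      ¬ (∀ x : K, (L (σ x) : K) = σ (L x : K))) := by
  push Not at hFnotfix
  obtain ⟨c, hcF, hc⟩ := hFnotfix
  have hL := not_forall_map_sigma_eq_mul σ F hcF ((hσF c).mpr hcF) hc L hLsmul hL0
  have hnsymm : ¬ ∀ v w : V, L (β w v) = L (β v w) := fun hsymm =>
    hL 1 fun y => by rw [one_mul, map_sigma_eq_of_symmetric hβsmul₁ hβherm hβne L hsymm]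
  have hnalt : ¬ ∀ v : V, L (β v v) = 0 := fun halt => hL (-1) fun y => by
    rw [neg_one_mul,
      map_sigma_eq_neg_of_alternating hβsmul₁ hβherm hβne L hβadd₁ hβadd₂ hLadd halt]
  have hherm := hermitian_iff_map_sigma_comm hβsmul₁ hβherm hβne F L
  exact ⟨hherm, by tauto⟩

/-- Let `K` be a field, `σ` an automorphism of `K` of order `2`, `F` a
subfield of `K` with `σ(F) = F` but `F` not contained in `Fix(σ)`, `V` a vector space
over `K`, `β : V × V → K` a nonzero hermitian form with respect to `σ`, and `L : K → F`
a nonzero `F`-linear map.  Then the `σ|_F`-sesquilinear form `Lβ = L ∘ β` over `F` is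
hermitian (with respect to the restriction of `σ` to `F`) if and only if `L ∘ σ = σ ∘ L`
as maps `K → F`; and `Lβ` is neither symmetric, alternating, nor hermitian if and only if
`L ∘ σ ≠ σ ∘ L`. -/
theorem stmt_6 {K : Type*} [Field K]
    (σ : K ≃+* K) (hσ2 : ∀ x : K, σ (σ x) = x) (hσne : σ ≠ RingEquiv.refl K)
    (F : Subfield K) (hσF : ∀ x : K, σ x ∈ F ↔ x ∈ F)
    (hFnotfix : ¬ (∀ x : K, x ∈ F → σ x = x))
    {V : Type*} [AddCommGroup V] [Module K V]
    (β : V → V → K)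
    (hβadd₁ : ∀ u v w : V, β (u + v) w = β u w + β v w)
    (hβadd₂ : ∀ u v w : V, β u (v + w) = β u v + β u w)
    (hβsmul₁ : ∀ (a : K) (v w : V), β (a • v) w = a * β v w)
    (hβsmul₂ : ∀ (a : K) (v w : V), β v (a • w) = σ a * β v w)
    (hβherm : ∀ v w : V, β w v = σ (β v w))
    (hβne : ∃ v w : V, β v w ≠ 0)
    (L : K → F)
    (hLadd : ∀ x y : K, L (x + y) = L x + L y)
    (hLsmul : ∀ (c : F) (x : K), L ((c : K) * x) = c * L x)
    (hL0 : ∃ x : K, L x ≠ 0) :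
    ((∀ v w : V, (L (β w v) : K) = σ (L (β v w) : K)) ↔
      (∀ x : K, (L (σ x) : K) = σ (L x : K))) ∧
    ((¬ (∀ v w : V, L (β w v) = L (β v w)) ∧
      ¬ (∀ v : V, L (β v v) = 0) ∧
      ¬ (∀ v w : V, (L (β w v) : K) = σ (L (β v w) : K))) ↔
      ¬ (∀ x : K, (L (σ x) : K) = σ (L x : K))) :=
  stmt_6_general σ F hσF hFnotfix β hβadd₁ hβadd₂ hβsmul₁ hβherm hβne L hLadd hLsmul hL0
end

section
/- Let K be a field, σ an automorphism of K of order 2, F a subfield of K contained in Fix(σ), V a vector space over K, β : V×V → K a nonzero hermitian form with respect to σ, and L : K → F a nonzero F-linear map, so that Lβ = L∘β is an F-bilinear form on V regarded as an F-vector space. Then: (1) Lβ is symmetric if and only if L∘σ = L; (2) if char K ≠ 2, then Lβ is alternating if and only if L∘σ = −L; (3) if char K ≠ 2, then Lβ is neither symmetric nor alternating if and only if L∘σ ≠ L and L∘σ ≠ −L. -/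
/-!
Since `β v₀ w₀ ≠ 0`, rescaling `v₀` makes `β · w₀` take every value `x`, and then
`β w₀ · = σ x`. Hence `L ∘ β` is symmetric exactly when `L` agrees with `L ∘ σ` on all of `K`.
Expanding `L (β (u + w₀) (u + w₀))` shows that alternation forces `L x + L (σ x) = 0`;
conversely, as `β v v` is `σ`-fixed, `L ∘ σ = -L` makes `L (β v v)` equal to its own negative,
which is `0` away from characteristic `2`.
-/

section

variable {K V : Type*} [DivisionRing K] [AddCommGroup V] [Module K V]
  {σ : K → K} {β : V → V → K}

theorem exists_apply_left_eq_of_ne_zero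
    (hsmul : ∀ (a : K) (v w : V), β (a • v) w = a * β v w) {v₀ w₀ : V} (h : β v₀ w₀ ≠ 0)
    (x : K) : ∃ u, β u w₀ = x :=
  ⟨(x * (β v₀ w₀)⁻¹) • v₀, by rw [hsmul, inv_mul_cancel_right₀ h]⟩

theorem comp_symmetric_iff_comp_eq {M : Type*}
    (hsmul : ∀ (a : K) (v w : V), β (a • v) w = a * β v w)
    (hherm : ∀ v w : V, β w v = σ (β v w)) (hne : ∃ v w : V, β v w ≠ 0) (L : K → M) :
    (∀ v w : V, L (β v w) = L (β w v)) ↔ ∀ x : K, L (σ x) = L x := by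
  obtain ⟨v₀, w₀, h⟩ := hne
  refine ⟨fun hL x => ?_, fun hL v w => by rw [hherm v w, hL]⟩
  obtain ⟨u, rfl⟩ := exists_apply_left_eq_of_ne_zero hsmul h x
  rw [← hherm, hL]

theorem comp_eq_neg_of_comp_alternating {M : Type*} [AddCommGroup M]
    (hadd₁ : ∀ u v w : V, β (u + v) w = β u w + β v w)
    (hadd₂ : ∀ u v w : V, β u (v + w) = β u v + β u w)
    (hsmul : ∀ (a : K) (v w : V), β (a • v) w = a * β v w)
    (hherm : ∀ v w : V, β w v = σ (β v w)) (hne : ∃ v w : V, β v w ≠ 0)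
    {L : K → M} (hLadd : ∀ x y : K, L (x + y) = L x + L y) (halt : ∀ v : V, L (β v v) = 0)
    (x : K) : L (σ x) = -L x := by
  obtain ⟨v₀, w₀, h⟩ := hne
  obtain ⟨u, rfl⟩ := exists_apply_left_eq_of_ne_zero hsmul h x
  have hexpand := halt (u + w₀)
  rw [hadd₁, hadd₂, hadd₂, hLadd, hLadd, hLadd, halt u, halt w₀, hherm u w₀] at hexpand
  exact eq_neg_of_add_eq_zero_left (by simpa [add_comm] using hexpand)

end

theorem comp_alternating_of_comp_eq_neg {K V E : Type*} {σ : K → K} {β : V → V → K}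
    [NonAssocRing E] [Nontrivial E] [NoZeroDivisors E] (hE : ringChar E ≠ 2)
    (hherm : ∀ v w : V, β w v = σ (β v w))
    {L : K → E} (hL : ∀ x : K, L (σ x) = -L x) (v : V) : L (β v v) = 0 :=
  (Ring.eq_self_iff_eq_zero_of_char_ne_two hE).mp (by rw [← hL, ← hherm])

theorem stmt_7_general {K : Type*} [Field K]
    (σ : K ≃+* K)
    (F : Subfield K)
    {V : Type*} [AddCommGroup V] [Module K V]
    (β : V → V → K)
    (hβadd₁ : ∀ u v w : V, β (u + v) w = β u w + β v w)
    (hβadd₂ : ∀ u v w : V, β u (v + w) = β u v + β u w)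
    (hβsmul₁ : ∀ (a : K) (v w : V), β (a • v) w = a * β v w)
    (hβherm : ∀ v w : V, β w v = σ (β v w))
    (hβne : ∃ v w : V, β v w ≠ 0)
    (L : K → F)
    (hLadd : ∀ x y : K, L (x + y) = L x + L y) :
    ((∀ v w : V, L (β v w) = L (β w v)) ↔ (∀ x : K, L (σ x) = L x)) ∧
    (ringChar K ≠ 2 →
      ((∀ v : V, L (β v v) = 0) ↔ (∀ x : K, L (σ x) = - L x))) ∧
    (ringChar K ≠ 2 →
      ((¬ (∀ v w : V, L (β v w) = L (β w v)) ∧ ¬ (∀ v : V, L (β v v) = 0)) ↔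
        (¬ (∀ x : K, L (σ x) = L x) ∧ ¬ (∀ x : K, L (σ x) = - L x)))) := by
  have hsymm := comp_symmetric_iff_comp_eq hβsmul₁ hβherm hβne L
  have halt (hK : ringChar K ≠ 2) :
      (∀ v : V, L (β v v) = 0) ↔ ∀ x : K, L (σ x) = -L x :=
    ⟨comp_eq_neg_of_comp_alternating hβadd₁ hβadd₂ hβsmul₁ hβherm hβne hLadd,
      comp_alternating_of_comp_eq_neg (Algebra.ringChar_eq F K ▸ hK) hβherm⟩
  exact ⟨hsymm, halt, fun hK => and_congr (not_congr hsymm) (not_congr (halt hK))⟩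

/-- Let `K` be a field, `σ` an automorphism of `K` of order `2`, `F` a
subfield of `K` contained in `Fix(σ)`, `V` a vector space over `K`, `β : V × V → K` a
nonzero hermitian form with respect to `σ`, and `L : K → F` a nonzero `F`-linear map, so
that `Lβ = L ∘ β` is an `F`-bilinear form on `V` regarded as an `F`-vector space.  Then:
(1) `Lβ` is symmetric if and only if `L ∘ σ = L`;
(2) if `char K ≠ 2`, then `Lβ` is alternating if and only if `L ∘ σ = −L`;
(3) if `char K ≠ 2`, then `Lβ` is neither symmetric nor alternating if and only if
`L ∘ σ ≠ L` and `L ∘ σ ≠ −L`. -/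
theorem stmt_7 {K : Type*} [Field K]
    (σ : K ≃+* K) (hσ2 : ∀ x : K, σ (σ x) = x) (hσne : σ ≠ RingEquiv.refl K)
    (F : Subfield K) (hFfix : ∀ x : K, x ∈ F → σ x = x)
    {V : Type*} [AddCommGroup V] [Module K V]
    (β : V → V → K)
    (hβadd₁ : ∀ u v w : V, β (u + v) w = β u w + β v w)
    (hβadd₂ : ∀ u v w : V, β u (v + w) = β u v + β u w)
    (hβsmul₁ : ∀ (a : K) (v w : V), β (a • v) w = a * β v w)
    (hβsmul₂ : ∀ (a : K) (v w : V), β v (a • w) = σ a * β v w)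
    (hβherm : ∀ v w : V, β w v = σ (β v w))
    (hβne : ∃ v w : V, β v w ≠ 0)
    (L : K → F)
    (hLadd : ∀ x y : K, L (x + y) = L x + L y)
    (hLsmul : ∀ (c : F) (x : K), L ((c : K) * x) = c * L x)
    (hL0 : ∃ x : K, L x ≠ 0) :
    ((∀ v w : V, L (β v w) = L (β w v)) ↔ (∀ x : K, L (σ x) = L x)) ∧
    (ringChar K ≠ 2 →
      ((∀ v : V, L (β v v) = 0) ↔ (∀ x : K, L (σ x) = - L x))) ∧
    (ringChar K ≠ 2 →
      ((¬ (∀ v w : V, L (β v w) = L (β w v)) ∧ ¬ (∀ v : V, L (β v v) = 0)) ↔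
        (¬ (∀ x : K, L (σ x) = L x) ∧ ¬ (∀ x : K, L (σ x) = - L x)))) :=
  stmt_7_general σ F β hβadd₁ hβadd₂ hβsmul₁ hβherm hβne L hLadd
end

section
/- Let q be a prime power, w ≥ 1, K = GF(q^w), F = GF(q), V an A-dimensional K-vector space with A even, Q : V → K a non-degenerate quadratic form admitting a totally singular K-subspace of dimension A/2 (i.e., (V,Q) is of type O^+), and L : K → F a nonzero F-linear map. Then LQ = L∘Q is a non-degenerate quadratic form on the Aw-dimensional F-vector space V admitting a totally singular F-subspace of dimension Aw/2; that is, (V,LQ) is of type O^+(Aw,q). -/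
open Module QuadraticMap

section aux

variable {K : Type*} [Field K] [Fintype K]

/-- In a finite field of characteristic 2, squaring is surjective. -/
private lemma sq_surj (h2 : (2 : K) = 0) : ∀ a : K, ∃ c : K, c * c = a := by
  have hinj : Function.Injective (fun x : K => x * x) := by
    intro x y hxy
    simp only at hxy
    have h : (x - y) * (x - y) = 0 := by
      have : (x - y) * (x - y) = x * x + y * y - 2 * (x * y) := by ring
      rw [this, h2, hxy, ← two_mul, h2] ; ring
    exact sub_eq_zero.mp (mul_self_eq_zero.mp h)
  exact fun a => (Finite.injective_iff_surjective).mp hinj a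

end aux

/-- Let `q` be a prime power, `w ≥ 1`, `K = GF(q^w)`, `F = GF(q)`, `V`
an `A`-dimensional `K`-vector space with `A` even, `Q : V → K` a non-degenerate quadratic
form admitting a totally singular `K`-subspace of dimension `A/2` (i.e. `(V,Q)` is of
type `O⁺`), and `L : K → F` a nonzero `F`-linear map.  Then `LQ = L ∘ Q` is a
non-degenerate quadratic form on the `Aw`-dimensional `F`-vector space `V` admitting a
totally singular `F`-subspace of dimension `Aw/2`; that is, `(V, LQ)` is of type
`O⁺(Aw, q)`. -/
theorem stmt_9 {F K V : Type*} [Field F] [Field K] [Algebra F K]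
    [AddCommGroup V] [Module K V] [Module F V] [IsScalarTower F K V]
    [Fintype F] [Fintype K] [FiniteDimensional K V]
    (q w A : ℕ) (hw : 1 ≤ w)
    (hcardF : Fintype.card F = q) (hcardK : Fintype.card K = q ^ w)
    (hA : Module.finrank K V = A) (hAeven : Even A)
    (Q : QuadraticForm K V)
    (hQnd : ∀ u : V, Q u = 0 → (∀ v : V, QuadraticMap.polar ⇑Q u v = 0) → u = 0)
    (hplus : ∃ W : Submodule K V, (∀ x ∈ W, Q x = 0) ∧ Module.finrank K W = A / 2)
    (L : K →ₗ[F] F) (hL : L ≠ 0) :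
    (∀ u : V, L (Q u) = 0 → (∀ v : V, L (QuadraticMap.polar ⇑Q u v) = 0) → u = 0) ∧
    Module.finrank F V = A * w ∧
    ∃ W : Submodule F V, (∀ x ∈ W, L (Q x) = 0) ∧ Module.finrank F W = A * w / 2 := by
  obtain ⟨W, hW0, hWrank⟩ := hplus
  obtain ⟨k, hk⟩ := hAeven
  -- a nonzero F-linear functional kills no full K-line through a nonzero element
  have keyL : ∀ a : K, (∀ c : K, L (c * a) = 0) → a = 0 := by
    intro a ha
    by_contra h0
    apply hL
    ext x
    have := ha (x * a⁻¹)
    rwa [mul_assoc, inv_mul_cancel₀ h0, mul_one] at this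
  -- Part 1: non-degeneracy of L ∘ Q
  have part1 : ∀ u : V, L (Q u) = 0 → (∀ v : V, L (QuadraticMap.polar ⇑Q u v) = 0) → u = 0 := by
    intro u hLQ hLpol
    -- step 1: polar Q u v = 0 for all v
    have hpolar : ∀ v : V, QuadraticMap.polar ⇑Q u v = 0 := by
      intro v
      apply keyL
      intro c
      have := hLpol (c • v)
      rwa [QuadraticMap.polar_smul_right, smul_eq_mul] at this
    -- step 2: Q u = 0
    have hQu : Q u = 0 := by
      by_cases h2 : (2 : K) = 0
      · -- characteristic 2
        by_contra hQu
        have hu : u ≠ 0 := fun h => hQu (by rw [h, map_zero])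
        -- the radical of the polar form is exactly the span of u
        set B : LinearMap.BilinForm K V := QuadraticMap.polarBilin Q with hB
        have hradical : LinearMap.ker B = Submodule.span K {u} := by
          apply le_antisymm
          · intro x hx
            rw [LinearMap.mem_ker] at hx
            have hxpol : ∀ v, QuadraticMap.polar ⇑Q x v = 0 := by
              intro v
              have : B x v = 0 := by rw [hx]; rfl
              simpa [hB] using this
            obtain ⟨c, hc⟩ := sq_surj h2 (Q x * (Q u)⁻¹)
            have hc2 : c * c * Q u = Q x := by
              rw [hc, mul_assoc, inv_mul_cancel₀ hQu, mul_one]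
            have hzero : x - c • u = 0 := by
              apply hQnd
              · have hdecomp : Q (x + (-c) • u) =
                    Q x + ((-c) * (-c)) • Q u + QuadraticMap.polar ⇑Q x ((-c) • u) := by
                  rw [QuadraticMap.polar]
                  rw [QuadraticMap.map_smul]
                  ring
                have : Q (x + (-c) • u) = Q x + Q x := by
                  rw [hdecomp, hxpol, add_zero, smul_eq_mul, neg_mul_neg, hc2]
                have h2Q : Q x + Q x = 0 := by
                  rw [← two_mul, h2, zero_mul]
                rw [sub_eq_add_neg, ← neg_smul]
                rw [this, h2Q]
              · intro v
                rw [sub_eq_add_neg, ← neg_smul, QuadraticMap.polar_add_left,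
                  QuadraticMap.polar_smul_left, hxpol, hpolar, smul_zero, add_zero]
            rw [Submodule.mem_span_singleton]
            exact ⟨c, by rw [eq_comm, ← sub_eq_zero]; simpa using hzero⟩
          · rw [Submodule.span_le, Set.singleton_subset_iff]
            rw [SetLike.mem_coe, LinearMap.mem_ker]
            ext v
            simpa [hB] using hpolar v
        -- U = W ⊔ span u is totally isotropic for the polar form
        have huW : u ∉ W := fun h => hQu (hW0 u h)
        set U : Submodule K V := W ⊔ Submodule.span K {u} with hU
        have hWpol : ∀ x ∈ W, ∀ y ∈ W, QuadraticMap.polar ⇑Q x y = 0 := by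
          intro x hx y hy
          rw [QuadraticMap.polar, hW0 _ (add_mem hx hy), hW0 _ hx, hW0 _ hy]
          ring
        have hUpol : ∀ x ∈ U, ∀ y ∈ U, QuadraticMap.polar ⇑Q x y = 0 := by
          have expand : ∀ z ∈ U, ∃ x ∈ W, ∃ c : K, z = x + c • u := by
            intro z hz
            rw [hU, Submodule.mem_sup] at hz
            obtain ⟨x, hx, s, hs, hxs⟩ := hz
            rw [Submodule.mem_span_singleton] at hs
            obtain ⟨c, hc⟩ := hs
            exact ⟨x, hx, c, by rw [← hxs, hc]⟩
          intro x hx y hy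
          obtain ⟨x', hx', c, rfl⟩ := expand x hx
          obtain ⟨y', hy', d, rfl⟩ := expand y hy
          rw [QuadraticMap.polar_add_left, QuadraticMap.polar_smul_left,
            QuadraticMap.polar_add_right, QuadraticMap.polar_smul_right,
            QuadraticMap.polar_comm _ x' u, hpolar, hpolar, hWpol x' hx' y' hy']
          simp
        -- orthogonal complement dimension count
        have hrefl : B.IsRefl := by
          intro x y hxy
          have : B y x = B x y := by
            simp only [hB, QuadraticMap.polarBilin_apply_apply]
            exact QuadraticMap.polar_comm _ y x
          rw [this, hxy]
        have horthtop : B.orthogonal ⊤ = Submodule.span K {u} := by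
          rw [← hradical]
          ext v
          rw [LinearMap.BilinForm.mem_orthogonal_iff, LinearMap.mem_ker]
          constructor
          · intro h
            ext x
            have := h x trivial
            have hsymm : B v x = B x v := by
              simp only [hB, QuadraticMap.polarBilin_apply_apply]
              exact QuadraticMap.polar_comm _ v x
            rw [LinearMap.zero_apply, hsymm, this]
          · intro h x _
            have hsymm : B x v = B v x := by
              simp only [hB, QuadraticMap.polarBilin_apply_apply]
              exact QuadraticMap.polar_comm _ x v
            rw [hsymm, h]
            rfl
        have hWu_inf : W ⊓ Submodule.span K {u} = ⊥ := by
          rw [eq_bot_iff]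
          intro x hx
          rw [Submodule.mem_inf] at hx
          obtain ⟨hxW, hxu⟩ := hx
          rw [Submodule.mem_span_singleton] at hxu
          obtain ⟨c, rfl⟩ := hxu
          rcases eq_or_ne c 0 with rfl | hc
          · simp
          · exfalso
            apply huW
            have := W.smul_mem c⁻¹ hxW
            rwa [smul_smul, inv_mul_cancel₀ hc, one_smul] at this
        have hUrank : finrank K U = k + 1 := by
          have := Submodule.finrank_sup_add_finrank_inf_eq W (Submodule.span K {u})
          rw [hWu_inf, finrank_bot, finrank_span_singleton hu, hWrank] at this
          simp only [add_zero] at this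
          rw [hU, this]
          omega
        have huU : Submodule.span K {u} ≤ U := le_sup_right
        have hUorth : U ≤ B.orthogonal U := by
          intro m hm
          rw [LinearMap.BilinForm.mem_orthogonal_iff]
          intro n hn
          have : B n m = QuadraticMap.polar ⇑Q n m := rfl
          rw [this, hUpol n hn m hm]
        have hmain := LinearMap.BilinForm.finrank_add_finrank_orthogonal hrefl U
        rw [horthtop] at hmain
        have hinfU : U ⊓ Submodule.span K {u} = Submodule.span K {u} :=
          inf_eq_right.mpr huU
        rw [hinfU, finrank_span_singleton hu, hUrank, hA] at hmain
        have hle : finrank K U ≤ finrank K (B.orthogonal U) :=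
          Submodule.finrank_mono hUorth
        rw [hUrank] at hle
        omega
      · -- characteristic ≠ 2
        have := hpolar u
        rw [QuadraticMap.polar_self] at this
        have h2' : (2 : K) * Q u = 0 := by
          rw [two_mul]
          simpa [two_smul] using this
        rcases mul_eq_zero.mp h2' with h | h
        · exact absurd h h2
        · exact h
    exact hQnd u hQu hpolar
  -- dimension of K over F
  haveI : FiniteDimensional F K := Module.Finite.of_finite
  haveI : FiniteDimensional F V := FiniteDimensional.trans F K V
  have hq1 : 1 < q := by
    rw [← hcardF]
    exact Fintype.one_lt_card
  have hFK : finrank F K = w := by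
    have := card_eq_pow_finrank (K := F) (V := K)
    rw [hcardF, hcardK] at this
    exact (Nat.pow_right_injective hq1 this.symm)
  have part2 : Module.finrank F V = A * w := by
    have := Module.finrank_mul_finrank F K V
    rw [hFK, hA] at this
    rw [← this, mul_comm]
  refine ⟨part1, part2, ?_⟩
  -- Part 3: totally singular subspace over F
  refine ⟨W.restrictScalars F, ?_, ?_⟩
  · intro x hx
    rw [Submodule.restrictScalars_mem] at hx
    rw [hW0 x hx, map_zero]
  · have e := ((Submodule.restrictScalarsEquiv F K V W).restrictScalars F).finrank_eq
    have hWf : finrank F K * finrank K W = finrank F W := Module.finrank_mul_finrank F K W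
    rw [hFK, hWrank] at hWf
    rw [e, ← hWf, hk]
    have h1 : (k + k) / 2 = k := by omega
    have h2 : (k + k) * w = 2 * (k * w) := by ring
    rw [h1, h2, Nat.mul_div_cancel_left _ (by norm_num : 0 < 2), mul_comm]
end

section
/- Let q be an odd prime power, F = GF(q), K = GF(q²), and let α, γ ∈ K be nonzero. Define the quadratic form LQ on K regarded as a 2-dimensional F-vector space by LQ(u) = Tr_{K/F}(αγu²) = αγu² + (αγu²)^q. Then LQ is of type O^+ (equivalently, there exists a nonzero u ∈ K with LQ(u) = 0) if and only if either (αγ)^{-2} lies in GF(q) but is not a square in GF(q), or there is no s ∈ GF(q)^* with (αγ)^{q+1} = −s²; and LQ is of type O^− (anisotropic) if and only if (αγ)^{-2} does not lie in GF(q)∖GF(q)^{*2} and (αγ)^{q+1} = −s² for some s ∈ GF(q)^*. -/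
/-!
Write `q = 2r + 1` and `β = αγ`; then `ε = β ^ ((q² - 1) / 2) = ±1`. For `u ≠ 0` the form
vanishes iff `(βu²) ^ (q - 1) = -1`, i.e. `u ^ (2(q - 1)) = -β ^ (1 - q)`, and in the cyclic group
`K*` of order `q² - 1` this is solvable iff `ε = (-1) ^ ((q + 1) / 2)`. Likewise `-β ^ (q + 1)` is
the square of some `s ∈ GF(q)*` iff it is a `2(q + 1)`-th power in `K*`, iff
`ε = (-1) ^ ((q - 1) / 2)`. So the form is isotropic exactly when no such `s` exists. The condition
on `β⁻²` forces `β ^ q = -β`, and then `u = 1` is already singular.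
-/

theorem IsCyclic.range_powMonoidHom_eq_ker {G : Type*} [CommGroup G] [IsCyclic G] [Finite G]
    {m k : ℕ} (h : m * k = Nat.card G) :
    (powMonoidHom m : G →* G).range = (powMonoidHom k).ker := by
  have hle : (powMonoidHom m : G →* G).range ≤ (powMonoidHom k).ker := by
    rintro _ ⟨y, rfl⟩
    simp only [MonoidHom.mem_ker, powMonoidHom_apply, ← pow_mul, h, pow_card_eq_one']
  refine Subgroup.eq_of_le_of_card_ge hle ?_
  have hm : m ∣ Nat.card G := ⟨k, h.symm⟩
  have hk : k ∣ Nat.card G := ⟨m, by rw [← h, mul_comm]⟩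
  have hm0 : m ≠ 0 := by rintro rfl; exact Nat.card_pos.ne (by simpa using h)
  rw [IsCyclic.card_powMonoidHom_ker, IsCyclic.card_powMonoidHom_range, Nat.gcd_eq_right hm,
    Nat.gcd_eq_right hk, ← h, Nat.mul_div_cancel_left _ (Nat.pos_of_ne_zero hm0)]

theorem FiniteField.exists_pow_eq_iff_pow_eq_one {K : Type*} [Field K] [Fintype K] {m k : ℕ}
    (h : m * k = Fintype.card K - 1) {c : K} (hc : c ≠ 0) :
    (∃ u : K, u ≠ 0 ∧ u ^ m = c) ↔ c ^ k = 1 := by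
  have hrange := IsCyclic.range_powMonoidHom_eq_ker (G := Kˣ) (m := m) (k := k)
    (by rw [h, Nat.card_units, Nat.card_eq_fintype_card])
  have hmem := SetLike.ext_iff.mp hrange (Units.mk0 c hc)
  simp only [MonoidHom.mem_range, powMonoidHom_apply, MonoidHom.mem_ker, Units.ext_iff,
    Units.val_pow_eq_pow_val, Units.val_mk0, Units.val_one] at hmem
  rw [← hmem]
  exact ⟨fun ⟨u, hu, huc⟩ => ⟨Units.mk0 u hu, huc⟩, fun ⟨u, hu⟩ => ⟨u, u.ne_zero, hu⟩⟩

theorem pow_eq_one_of_pow_succ_eq_self {M₀ : Type*} [MonoidWithZero M₀] [IsRightCancelMulZero M₀]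
    {x : M₀} {n : ℕ} (hx : x ≠ 0) (h : x ^ (n + 1) = x) : x ^ n = 1 :=
  (mul_left_eq_self₀.mp (by rwa [← pow_succ])).resolve_right hx

theorem add_pow_succ_eq_zero_iff {K : Type*} [Field K] {w : K} {n : ℕ} (hw : w ≠ 0) :
    w + w ^ (n + 1) = 0 ↔ w ^ n = -1 := by
  rw [show w + w ^ (n + 1) = w * (1 + w ^ n) by ring, mul_eq_zero, or_iff_right hw,
    add_eq_zero_iff_eq_neg']

theorem FiniteField.neg_one_ne_one_of_odd_card {K : Type*} [Field K] [Fintype K]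
    (h : Odd (Fintype.card K)) : (-1 : K) ≠ 1 :=
  Ring.neg_one_ne_one_of_char_ne_two fun h2 => by
    have := FiniteField.even_card_of_char_two h2
    rw [Nat.odd_iff] at h
    omega

theorem pow_eq_neg_self_of_not_exists_fixed_sqrt {K : Type*} [Field K] {β : K} {q : ℕ}
    (hfix : (β⁻¹ ^ 2) ^ q = β⁻¹ ^ 2) (hsqrt : ¬ ∃ t : K, t ^ q = t ∧ t ^ 2 = β⁻¹ ^ 2) :
    β ^ q = -β := by
  have hsq : (β ^ q) ^ 2 = β ^ 2 := by
    rw [inv_pow, inv_pow, ← pow_mul, mul_comm, pow_mul] at hfix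
    exact inv_injective hfix
  refine (sq_eq_sq_iff_eq_or_eq_neg.mp hsq).resolve_left fun hβ => hsqrt ⟨β⁻¹, ?_, rfl⟩
  rw [inv_pow, hβ]

theorem card_sub_one_eq_of_card_eq {K : Type*} [Fintype K] {r : ℕ}
    (hcard : Fintype.card K = (2 * r + 1) ^ 2) : Fintype.card K - 1 = 4 * r * (r + 1) := by
  rw [hcard]; ring_nf; omega

section OddSquareCard

variable {K : Type*} [Field K] [Fintype K] {r : ℕ} {β : K}

theorem pow_card_sub_one_div_two_eq_or (hcard : Fintype.card K = (2 * r + 1) ^ 2) (hβ : β ≠ 0) :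
    β ^ (2 * r * (r + 1)) = (-1) ^ r ∨ β ^ (2 * r * (r + 1)) = (-1) ^ (r + 1) := by
  have h : (β ^ (2 * r * (r + 1))) ^ 2 = ((-1) ^ r) ^ 2 := by
    rw [← pow_mul, show 2 * r * (r + 1) * 2 = 4 * r * (r + 1) by ring,
      ← card_sub_one_eq_of_card_eq hcard, FiniteField.pow_card_sub_one_eq_one β hβ, ← pow_mul,
      mul_comm, pow_mul, neg_one_sq, one_pow]
  rw [pow_succ, mul_neg_one]
  exact sq_eq_sq_iff_eq_or_eq_neg.mp h

theorem exists_trace_mul_sq_eq_zero_iff (hcard : Fintype.card K = (2 * r + 1) ^ 2)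
    (hβ : β ≠ 0) :
    (∃ u : K, u ≠ 0 ∧ β * u ^ 2 + (β * u ^ 2) ^ (2 * r + 1) = 0) ↔
      β ^ (2 * r * (r + 1)) = (-1) ^ (r + 1) := by
  have hb : β ^ (2 * r) ≠ 0 := pow_ne_zero _ hβ
  have hc : -1 / β ^ (2 * r) ≠ 0 := div_ne_zero (neg_ne_zero.mpr one_ne_zero) hb
  calc (∃ u : K, u ≠ 0 ∧ β * u ^ 2 + (β * u ^ 2) ^ (2 * r + 1) = 0)
      ↔ ∃ u : K, u ≠ 0 ∧ u ^ (4 * r) = -1 / β ^ (2 * r) := by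
        refine exists_congr fun u => and_congr_right fun hu => ?_
        rw [add_pow_succ_eq_zero_iff (mul_ne_zero hβ (pow_ne_zero 2 hu)), mul_pow, ← pow_mul,
          show 2 * (2 * r) = 4 * r by ring, eq_div_iff hb, mul_comm]
    _ ↔ (-1 / β ^ (2 * r)) ^ (r + 1) = 1 :=
        FiniteField.exists_pow_eq_iff_pow_eq_one (by rw [card_sub_one_eq_of_card_eq hcard]) hc
    _ ↔ β ^ (2 * r * (r + 1)) = (-1) ^ (r + 1) := by
        rw [div_pow, ← pow_mul, div_eq_one_iff_eq (pow_ne_zero _ hβ), eq_comm]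

theorem exists_fixed_sq_eq_neg_pow_iff (hcard : Fintype.card K = (2 * r + 1) ^ 2)
    (hβ : β ≠ 0) :
    (∃ s : K, s ^ (2 * r + 1) = s ∧ s ≠ 0 ∧ β ^ (2 * r + 1 + 1) = -s ^ 2) ↔
      β ^ (2 * r * (r + 1)) = (-1) ^ r := by
  constructor
  · rintro ⟨s, hs, hs0, hβs⟩
    calc β ^ (2 * r * (r + 1)) = (β ^ (2 * r + 1 + 1)) ^ r := by rw [← pow_mul]; ring_nf
      _ = (-1) ^ r * (s ^ (2 * r)) := by rw [hβs, neg_pow, ← pow_mul]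
      _ = (-1) ^ r := by rw [pow_eq_one_of_pow_succ_eq_self hs0 hs, mul_one]
  · intro h
    have hx : -β ^ (2 * r + 1 + 1) ≠ 0 := by simp [hβ]
    have hxr : (-β ^ (2 * r + 1 + 1)) ^ r = 1 := by
      rw [neg_pow, ← pow_mul, show (2 * r + 1 + 1) * r = 2 * r * (r + 1) by ring, h,
        ← mul_pow, neg_one_mul, neg_neg, one_pow]
    obtain ⟨y, hy0, hy⟩ := (FiniteField.exists_pow_eq_iff_pow_eq_one (m := (r + 1) * 2 * 2)
      (by rw [card_sub_one_eq_of_card_eq hcard]; ring) hx).mpr hxr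
    have hsq : (y ^ ((r + 1) * 2)) ^ 2 = -β ^ (2 * r + 1 + 1) := by rw [← pow_mul, hy]
    refine ⟨y ^ ((r + 1) * 2), ?_, pow_ne_zero _ hy0, by rw [hsq, neg_neg]⟩
    rw [pow_succ, pow_mul _ 2 r, hsq, hxr, one_mul]

theorem exists_trace_mul_sq_eq_zero_iff_not_exists (hcard : Fintype.card K = (2 * r + 1) ^ 2)
    (hβ : β ≠ 0) :
    (∃ u : K, u ≠ 0 ∧ β * u ^ 2 + (β * u ^ 2) ^ (2 * r + 1) = 0) ↔
      ¬ ∃ s : K, s ^ (2 * r + 1) = s ∧ s ≠ 0 ∧ β ^ (2 * r + 1 + 1) = -s ^ 2 := by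
  have hodd : Odd (Fintype.card K) := hcard ▸ (odd_two_mul_add_one r).pow
  have hne : (-1 : K) ^ (r + 1) ≠ (-1) ^ r := fun h =>
    FiniteField.neg_one_ne_one_of_odd_card hodd <| mul_left_cancel₀
      (pow_ne_zero r (neg_ne_zero.mpr one_ne_zero)) (by rw [← pow_succ, h, mul_one])
  rw [exists_trace_mul_sq_eq_zero_iff hcard hβ, exists_fixed_sq_eq_neg_pow_iff hcard hβ]
  exact ⟨fun h h' => hne (h.symm.trans h'),
    fun h => (pow_card_sub_one_div_two_eq_or hcard hβ).resolve_left h⟩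

theorem exists_trace_mul_sq_eq_zero_iff_or (hcard : Fintype.card K = (2 * r + 1) ^ 2)
    (hβ : β ≠ 0) :
    (∃ u : K, u ≠ 0 ∧ β * u ^ 2 + (β * u ^ 2) ^ (2 * r + 1) = 0) ↔
      (((β⁻¹ ^ 2) ^ (2 * r + 1) = β⁻¹ ^ 2 ∧ ¬ ∃ t : K, t ^ (2 * r + 1) = t ∧ t ^ 2 = β⁻¹ ^ 2) ∨
        ¬ ∃ s : K, s ^ (2 * r + 1) = s ∧ s ≠ 0 ∧ β ^ (2 * r + 1 + 1) = -s ^ 2) := by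
  have hiso := exists_trace_mul_sq_eq_zero_iff_not_exists hcard hβ
  refine ⟨fun h => Or.inr (hiso.mp h), ?_⟩
  rintro (⟨hfix, hsqrt⟩ | hnone)
  · refine ⟨1, one_ne_zero, ?_⟩
    rw [one_pow, mul_one, pow_eq_neg_self_of_not_exists_fixed_sqrt hfix hsqrt, add_neg_cancel]
  · exact hiso.mpr hnone

end OddSquareCard

/-- Let `q` be an odd prime power, `F = GF(q)`, `K = GF(q²)`, and let
`α, γ ∈ K` be nonzero.  Define the quadratic form `LQ` on `K` regarded as a
`2`-dimensional `F`-vector space by `LQ(u) = Tr_{K/F}(αγu²) = αγu² + (αγu²)^q`.  Then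
`LQ` is of type `O⁺` (equivalently, there exists a nonzero `u ∈ K` with `LQ(u) = 0`) if
and only if either `(αγ)⁻²` lies in `GF(q)` but is not a square in `GF(q)`, or there is
no `s ∈ GF(q)*` with `(αγ)^{q+1} = −s²`; and `LQ` is of type `O⁻` (anisotropic) if and
only if `(αγ)⁻²` does not lie in `GF(q) ∖ GF(q)*²` and `(αγ)^{q+1} = −s²` for some
`s ∈ GF(q)*`.  (Here `GF(q)` is realised inside `K` as the set of elements fixed by
`x ↦ x^q`.) -/
theorem stmt_12 {K : Type*} [Field K] [Fintype K] (q : ℕ) (hq : Odd q)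
    (hcardK : Fintype.card K = q ^ 2)
    (α γ : K) (hα : α ≠ 0) (hγ : γ ≠ 0) :
    ((∃ u : K, u ≠ 0 ∧ α * γ * u ^ 2 + (α * γ * u ^ 2) ^ q = 0) ↔
      ((((α * γ)⁻¹ ^ 2) ^ q = (α * γ)⁻¹ ^ 2 ∧
          ¬ ∃ t : K, t ^ q = t ∧ t ^ 2 = (α * γ)⁻¹ ^ 2) ∨
        ¬ ∃ s : K, s ^ q = s ∧ s ≠ 0 ∧ (α * γ) ^ (q + 1) = -s ^ 2)) ∧
    ((∀ u : K, u ≠ 0 → α * γ * u ^ 2 + (α * γ * u ^ 2) ^ q ≠ 0) ↔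
      (¬ (((α * γ)⁻¹ ^ 2) ^ q = (α * γ)⁻¹ ^ 2 ∧
          ¬ ∃ t : K, t ^ q = t ∧ t ^ 2 = (α * γ)⁻¹ ^ 2) ∧
        ∃ s : K, s ^ q = s ∧ s ≠ 0 ∧ (α * γ) ^ (q + 1) = -s ^ 2)) := by
  obtain ⟨r, rfl⟩ := hq
  have isotropic_iff := exists_trace_mul_sq_eq_zero_iff_or hcardK (mul_ne_zero hα hγ)
  refine ⟨isotropic_iff, ?_⟩
  have anisotropic_iff := not_congr isotropic_iff
  rw [not_or, not_not] at anisotropic_iff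
  simpa only [not_exists, not_and] using anisotropic_iff
end

section
/- Let q be a prime power and w an odd positive integer such that K = GF(q^w) admits an automorphism σ of order 2 (so that GF(q) is not contained in Fix(σ)). Let V be a vector space over K, β : V×V → K a nonzero hermitian form with respect to σ, α ∈ K^*, and L : K → GF(q) the GF(q)-linear map L(x) = Tr_{K/GF(q)}(αx). Then the σ|_{GF(q)}-sesquilinear form Lβ = L∘β over GF(q) is hermitian if and only if σ(α) = α, and Lβ is neither symmetric, alternating, nor hermitian if and only if σ(α) ≠ α. -/
/-- The `GF(q)`-linear map `L : GF(q^w) → GF(q)`, `L(x) = Tr_{GF(q^w)/GF(q)}(αx)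
= Σ_{i=0}^{w-1} (αx)^{q^i}`, with values taken in `K = GF(q^w)` (the trace lands in the
copy of `GF(q)` inside `K`). -/
def traceMul {K : Type*} [Field K] (q w : ℕ) (α : K) : K → K :=
  fun x => ∑ i ∈ Finset.range w, (α * x) ^ q ^ i

open Polynomial in
lemma polyVanish {K : Type*} [Field K] [Fintype K] (r : ℕ) (c : ℕ → K) (e : ℕ → ℕ)
    (hinj : ∀ i < r, ∀ j < r, e i = e j → i = j)
    (hlt : ∀ i < r, e i < Fintype.card K)
    (h : ∀ x : K, ∑ i ∈ Finset.range r, c i * x ^ e i = 0) :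
    ∀ i < r, c i = 0 := by
  classical
  set P : K[X] := ∑ i ∈ Finset.range r, Polynomial.C (c i) * Polynomial.X ^ e i with hP
  have hdeg : P.natDegree < Fintype.card K := by
    rcases Nat.eq_zero_or_pos r with hr | hr
    · simp [hP, hr, Fintype.card_pos]
    have : P.natDegree ≤ Fintype.card K - 1 := by
      apply Polynomial.natDegree_sum_le_of_forall_le
      intro i hi
      refine le_trans (Polynomial.natDegree_C_mul_le _ _) ?_
      simpa using Nat.le_sub_one_of_lt (hlt i (Finset.mem_range.mp hi))
    have hc := Fintype.card_pos (α := K)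
    omega
  have hP0 : P = 0 := by
    apply Polynomial.eq_zero_of_natDegree_lt_card_of_eval_eq_zero P Function.injective_id _ hdeg
    intro x
    simpa [hP, Polynomial.eval_finset_sum] using h x
  intro i hi
  have hcoeff := congrArg (fun Q : K[X] => Q.coeff (e i)) hP0
  simp only [hP, Polynomial.finset_sum_coeff, Polynomial.coeff_zero] at hcoeff
  rw [Finset.sum_eq_single i] at hcoeff
  · simpa using hcoeff
  · intro j hj hne
    simp only [Polynomial.coeff_C_mul, Polynomial.coeff_X_pow]
    rw [if_neg (fun hh => hne (hinj j (Finset.mem_range.mp hj) i hi hh.symm)), mul_zero]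
  · intro hir; exact absurd (Finset.mem_range.mpr hi) hir

lemma powRed {K : Type*} [Field K] [Fintype K] (p n : ℕ) (hn : 0 < n)
    (hcard : Fintype.card K = p ^ n) :
    ∀ (a : ℕ) (x : K), x ^ p ^ a = x ^ p ^ (a % n) := by
  intro a
  induction a using Nat.strong_induction_on with
  | _ a ih =>
    intro x
    by_cases h : a < n
    · rw [Nat.mod_eq_of_lt h]
    · push_neg at h
      have h1 : a = (a - n) + n := by omega
      have h2 : x ^ p ^ a = (x ^ p ^ (a - n)) ^ p ^ n := by
        rw [← pow_mul, ← pow_add, ← h1]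
      have h3 : (x ^ p ^ (a - n)) ^ p ^ n = x ^ p ^ (a - n) := by
        rw [← hcard]; exact FiniteField.pow_card _
      rw [h2, h3, ih (a - n) (by omega) x, Nat.mod_eq_sub_mod h]

lemma frobClass {K : Type*} [Field K] [Fintype K] (p : ℕ) (n : ℕ) (hp : p.Prime) (hn : 0 < n)
    [CharP K p] (hcard : Fintype.card K = p ^ n) (σ : K ≃+* K) :
    ∃ j < n, ∀ x : K, σ x = x ^ p ^ j := by
  classical
  obtain ⟨g, hg⟩ := IsCyclic.exists_generator (α := Kˣ)
  have hord : orderOf (g : K) = p ^ n - 1 := by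
    rw [orderOf_units, orderOf_eq_card_of_forall_mem_zpowers hg, Nat.card_eq_fintype_card, Fintype.card_units, hcard]
  -- every nonzero element is a power of g
  have hpow : ∀ x : K, x ≠ 0 → ∃ k : ℕ, x = (g : K) ^ k := by
    intro x hx
    lift x to Kˣ using isUnit_iff_ne_zero.mpr hx
    obtain ⟨k, hk⟩ := (mem_powers_iff_mem_zpowers).mpr (hg x)
    exact ⟨k, by rw [← hk]; push_cast; ring⟩
  -- distinctness of frobenius powers on g
  have hdist : ∀ i < n, ∀ j < n, (g : K) ^ p ^ i = (g : K) ^ p ^ j → i = j := by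
    intro i hi j hj hij
    by_contra hne
    wlog hlt : i < j generalizing i j
    · exact this j hj i hi hij.symm (Ne.symm hne) (by omega)
    have hij' : g ^ p ^ i = g ^ p ^ j := Units.ext (by push_cast [hij]; rfl)
    have := (pow_eq_pow_iff_modEq).mp hij'
    rw [← orderOf_units, hord] at this
    have hdvd : (p ^ n - 1) ∣ (p ^ j - p ^ i) :=
      (Nat.modEq_iff_dvd' (Nat.pow_le_pow_right hp.one_lt.le hlt.le)).mp this
    have h2 : 0 < p ^ j - p ^ i := by
      have := Nat.pow_lt_pow_right hp.one_lt hlt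
      omega
    have h3 : p ^ j - p ^ i < p ^ n - 1 := by
      have h4 : p ^ j < p ^ n := Nat.pow_lt_pow_right hp.one_lt hj
      have h5 : 0 < p ^ i := Nat.pow_pos hp.pos
      omega
    exact absurd (Nat.le_of_dvd h2 hdvd) (by omega)
  -- the minimal polynomial of g over ZMod p
  letI : Algebra (ZMod p) K := ZMod.algebra K p
  haveI : Fact p.Prime := ⟨hp⟩
  have hfinrank : Module.finrank (ZMod p) K = n := by
    have := Module.card_eq_pow_finrank (K := ZMod p) (V := K)
    rw [ZMod.card, hcard] at this
    exact (Nat.pow_right_injective hp.two_le this.symm)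
  have hint : IsIntegral (ZMod p) (g : K) := IsIntegral.of_finite _ _
  set m : Polynomial (ZMod p) := minpoly (ZMod p) (g : K) with hm
  have hmdeg : m.natDegree ≤ n := hfinrank ▸ minpoly.natDegree_le (g : K)
  set M : Polynomial K := m.map (algebraMap (ZMod p) K) with hM
  have hMne : M ≠ 0 :=
    Polynomial.map_ne_zero (minpoly.ne_zero hint)
  have hMdeg : M.natDegree ≤ n := by
    rw [hM, Polynomial.natDegree_map]; exact hmdeg
  -- roots
  have hroot : ∀ τ : K →+* K, M.IsRoot (τ (g : K)) := by
    intro τ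
    have hcomm : ∀ r : ZMod p, τ (algebraMap (ZMod p) K r) = algebraMap (ZMod p) K r := by
      intro r
      have : τ.comp (algebraMap (ZMod p) K) = algebraMap (ZMod p) K := Subsingleton.elim _ _
      exact congrFun (congrArg DFunLike.coe this) r
    let τa : K →ₐ[ZMod p] K := ⟨τ, hcomm⟩
    have : Polynomial.aeval (τa (g : K)) m = τa (Polynomial.aeval (g : K) m) :=
      (Polynomial.aeval_algHom_apply τa (g : K) m)
    rw [minpoly.aeval, map_zero] at this
    rwa [Polynomial.IsRoot, hM, Polynomial.eval_map, ← Polynomial.aeval_def]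
  have hrootF : ∀ i : ℕ, M.IsRoot ((g : K) ^ p ^ i) := by
    intro i
    have := hroot (iterateFrobenius K p i)
    rwa [iterateFrobenius_def] at this
  have hrootσ : M.IsRoot (σ (g : K)) := hroot σ.toRingHom
  -- counting argument
  have hσmem : σ (g : K) ∈ (Finset.range n).image (fun i => (g : K) ^ p ^ i) := by
    by_contra hnotin
    have hcardim : ((Finset.range n).image (fun i => (g : K) ^ p ^ i)).card = n := by
      rw [Finset.card_image_of_injOn, Finset.card_range]
      intro i hi j hj hij
      exact hdist i (Finset.mem_range.mp hi) j (Finset.mem_range.mp hj) hij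
    have hsub : insert (σ (g : K)) ((Finset.range n).image (fun i => (g : K) ^ p ^ i))
        ⊆ M.roots.toFinset := by
      intro x hx
      rw [Finset.mem_insert] at hx
      rw [Multiset.mem_toFinset, Polynomial.mem_roots hMne]
      rcases hx with rfl | hx
      · exact hrootσ
      · obtain ⟨i, _, rfl⟩ := Finset.mem_image.mp hx
        exact hrootF i
    have := Finset.card_le_card hsub
    rw [Finset.card_insert_of_notMem hnotin, hcardim] at this
    have h2 : M.roots.toFinset.card ≤ M.natDegree :=
      le_trans (Multiset.toFinset_card_le _) (Polynomial.card_roots' M)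
    omega
  obtain ⟨j, hj, hgj⟩ := Finset.mem_image.mp hσmem
  refine ⟨j, Finset.mem_range.mp hj, ?_⟩
  intro x
  by_cases hx : x = 0
  · rw [hx, map_zero, zero_pow (Nat.pow_pos hp.pos).ne']
  · obtain ⟨k, rfl⟩ := hpow x hx
    rw [map_pow, ← hgj, ← pow_mul, mul_comm, pow_mul]

/-- Let `q` be a prime power and `w` an odd positive integer such that
`K = GF(q^w)` admits an automorphism `σ` of order `2` (so that `GF(q)` is not contained
in `Fix(σ)`).  Let `V` be a vector space over `K`, `β : V × V → K` a nonzero hermitian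
form with respect to `σ`, `α ∈ K*`, and `L : K → GF(q)` the `GF(q)`-linear map
`L(x) = Tr_{K/GF(q)}(αx)`.  Then the `σ|_{GF(q)}`-sesquilinear form `Lβ = L ∘ β` over
`GF(q)` is hermitian if and only if `σ(α) = α`, and `Lβ` is neither symmetric,
alternating, nor hermitian if and only if `σ(α) ≠ α`. -/
theorem stmt_15 {K : Type*} [Field K] [Fintype K]
    (q w : ℕ) (hwodd : Odd w) (hwpos : 0 < w)
    (hcardK : Fintype.card K = q ^ w)
    (σ : K ≃+* K) (hσ2 : ∀ x : K, σ (σ x) = x) (hσne : σ ≠ RingEquiv.refl K)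
    {V : Type*} [AddCommGroup V] [Module K V]
    (β : V → V → K)
    (hβadd₁ : ∀ u v w : V, β (u + v) w = β u w + β v w)
    (hβadd₂ : ∀ u v w : V, β u (v + w) = β u v + β u w)
    (hβsmul₁ : ∀ (a : K) (v w : V), β (a • v) w = a * β v w)
    (hβsmul₂ : ∀ (a : K) (v w : V), β v (a • w) = σ a * β v w)
    (hβherm : ∀ v w : V, β w v = σ (β v w))
    (hβne : ∃ v w : V, β v w ≠ 0)
    (α : K) (hα : α ≠ 0) :
    ((∀ v u : V, traceMul q w α (β u v) = σ (traceMul q w α (β v u))) ↔ σ α = α) ∧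
    ((¬ (∀ v u : V, traceMul q w α (β u v) = traceMul q w α (β v u)) ∧
      ¬ (∀ v : V, traceMul q w α (β v v) = 0) ∧
      ¬ (∀ v u : V, traceMul q w α (β u v) = σ (traceMul q w α (β v u)))) ↔
      σ α ≠ α) := by
  classical
  -- q ≥ 2
  have hq2 : 2 ≤ q := by
    by_contra h
    have hcard2 : 2 ≤ Fintype.card K := Fintype.one_lt_card
    have : q ^ w ≤ 1 ^ w := Nat.pow_le_pow_left (by omega) w
    rw [one_pow] at this
    omega
  -- characteristic and cardinality
  set p := ringChar K with hpdef
  haveI hcharp : CharP K p := ringChar.charP K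
  obtain ⟨n0, hp, hcardp⟩ := FiniteField.card K p
  haveI : Fact p.Prime := ⟨hp⟩
  set n : ℕ := (n0 : ℕ) with hndef
  have hn : 0 < n := n0.pos
  -- q = p ^ m, n = m * w
  have hqpw : q ^ w = p ^ n := by rw [← hcardK, hcardp]
  obtain ⟨m, hmn, hqm⟩ := (Nat.dvd_prime_pow hp).mp
    (show q ∣ p ^ n by rw [← hqpw]; exact dvd_pow_self q hwpos.ne')
  have hm1 : 1 ≤ m := by
    rcases Nat.eq_zero_or_pos m with hm0 | h; · rw [hm0, pow_zero] at hqm; omega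
    exact h
  have hnmw : n = m * w := by
    have h1 : p ^ (m * w) = p ^ n := by rw [pow_mul, ← hqm, hqpw]
    exact (Nat.pow_right_injective hp.two_le h1).symm
  -- σ is a Frobenius power
  obtain ⟨j, hjn, hσj⟩ := frobClass p n hp hn hcardp σ
  -- σ² = id gives n = 2 * j
  have hfix : ∀ x : K, x ^ p ^ ((2 * j) % n) = x := by
    intro x
    have h1 := hσ2 x
    rw [hσj, hσj, ← pow_mul, ← pow_add] at h1
    have h2 : x ^ p ^ (2 * j) = x := by rw [two_mul]; exact h1
    rw [← powRed p n hn hcardp (2 * j) x]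
    exact h2
  have hj0 : (2 * j) % n = 0 := by
    by_contra hne0
    have hpj : p ^ ((2 * j) % n) ≠ 1 := by
      intro h
      have := Nat.one_lt_pow hne0 hp.one_lt
      omega
    have h2 := polyVanish 2 (fun i => if i = 0 then (1 : K) else -1)
      (fun i => if i = 0 then p ^ ((2 * j) % n) else 1)
      (by
        intro i hi k hk hik
        interval_cases i <;> interval_cases k
        · rfl
        · norm_num at hik; exact absurd hik (by have := hp.one_lt; omega)
        · norm_num at hik; exact absurd hik.symm hpj
        · rfl)
      (by
        intro i hi
        have hlt1 : p ^ ((2 * j) % n) < Fintype.card K := by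
          rw [hcardp]; exact Nat.pow_lt_pow_right hp.one_lt (Nat.mod_lt _ hn)
        have hlt2 : 1 < Fintype.card K := Fintype.one_lt_card
        by_cases h1 : i = 0
        · simpa [h1] using hlt1
        · simpa [h1] using hlt2)
      (by
        intro x
        rw [Finset.sum_range_succ, Finset.sum_range_one]
        norm_num [hfix x])
      0 (by omega)
    norm_num at h2
  have hn2j : n = 2 * j := by
    have hdvd : n ∣ 2 * j := Nat.dvd_of_mod_eq_zero hj0
    have hjne : j ≠ 0 := by
      rintro rfl
      exact hσne (RingEquiv.ext fun x => by simpa using hσj x)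
    obtain ⟨k, hk⟩ := hdvd
    have hk1 : k = 1 := by
      by_contra hk1
      rcases Nat.lt_or_ge k 2 with h | h
      · interval_cases k
        · omega
        · exact hk1 rfl
      · have h3 : n * 2 ≤ n * k := Nat.mul_le_mul_left n h
        omega
    subst hk1
    omega
  -- m = 2 * t, j = t * w
  have hmeven : 2 ∣ m := by
    have h2 : m * w = 2 * j := by omega
    rcases Nat.even_or_odd m with he | ho
    · exact he.two_dvd
    · exfalso
      obtain ⟨r, hr⟩ := ho.mul hwodd
      omega
  obtain ⟨t, hmt⟩ := hmeven
  have ht1 : 1 ≤ t := by omega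
  have hjtw : j = t * w := by
    have h1 : m * w = 2 * (t * w) := by rw [hmt]; ring
    omega
  -- the trace map is additive
  have hTadd : ∀ γ x y : K, traceMul q w γ (x + y) = traceMul q w γ x + traceMul q w γ y := by
    intro γ x y
    unfold traceMul
    rw [← Finset.sum_add_distrib]
    apply Finset.sum_congr rfl
    intro i _
    rw [mul_add, hqm, ← pow_mul]
    exact add_pow_char_pow ..
  -- surjectivity of β
  have hsurjβ : ∀ c : K, ∃ v u : V, β v u = c := by
    obtain ⟨v0, u0, h0⟩ := hβne
    intro c
    refine ⟨(c * (β v0 u0)⁻¹) • v0, u0, ?_⟩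
    rw [hβsmul₁]
    field_simp
  -- σ and traceMul
  have hTσcomp : ∀ (γ c : K), σ (traceMul q w γ c) = traceMul q w (σ γ) (σ c) := by
    intro γ c
    unfold traceMul
    rw [map_sum]
    apply Finset.sum_congr rfl
    intro i _
    rw [map_pow, map_mul]
  -- the key contradiction lemma
  have key : ∀ δ : K, (∀ c : K, traceMul q w α (σ c) + δ * traceMul q w α c = 0) → False := by
    intro δ hδ
    -- exponent bookkeeping
    set uu : ℕ → ℕ := fun i => if i < w then (w + 2 * i) % (2 * w) else 2 * (i - w) with huu
    have huuval : ∀ i < w, uu i = if 2 * i < w then w + 2 * i else 2 * i - w := by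
      intro i hi
      simp only [huu, if_pos hi]
      rcases Nat.lt_or_ge (2 * i) w with h2 | h2
      · rw [if_pos h2]; exact Nat.mod_eq_of_lt (by omega)
      · rw [if_neg (by omega : ¬ 2 * i < w), Nat.mod_eq_sub_mod (by omega)]
        have h3 : w + 2 * i - 2 * w = 2 * i - w := by omega
        rw [h3]
        exact Nat.mod_eq_of_lt (by omega)
    have huinj : ∀ i < w + w, ∀ k < w + w, uu i = uu k → i = k := by
      intro i hi k hk hik
      have hwodd' : w % 2 = 1 := Nat.odd_iff.mp hwodd
      by_cases h1 : i < w <;> by_cases h2 : k < w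
      · rw [huuval i h1, huuval k h2] at hik
        split_ifs at hik <;> omega
      · rw [huuval i h1] at hik
        simp only [huu, if_neg h2] at hik
        split_ifs at hik <;> omega
      · rw [huuval k h2] at hik
        simp only [huu, if_neg h1] at hik
        split_ifs at hik <;> omega
      · simp only [huu, if_neg h1, if_neg h2] at hik
        omega
    have huub : ∀ i < w + w, uu i < 2 * w := by
      intro i hi
      simp only [huu]
      split_ifs with h1
      · exact Nat.mod_lt _ (by omega)
      · omega
    set ee : ℕ → ℕ := fun i => p ^ (t * uu i) with hee
    set cc : ℕ → K := fun i => if i < w then α ^ q ^ i else δ * α ^ q ^ (i - w) with hcc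
    -- the summand computation for the σ part
    have hTσ : ∀ c : K, traceMul q w α (σ c) =
        ∑ i ∈ Finset.range w, α ^ q ^ i * c ^ p ^ (t * ((w + 2 * i) % (2 * w))) := by
      intro c
      unfold traceMul
      apply Finset.sum_congr rfl
      intro i hi
      have hgoal : (σ c) ^ q ^ i = c ^ p ^ (t * ((w + 2 * i) % (2 * w))) := by
        rw [hσj c, ← pow_mul]
        have h4 : p ^ j * q ^ i = p ^ (t * (w + 2 * i)) := by
          rw [hqm, ← pow_mul, ← pow_add, hjtw, hmt]
          congr 1
          ring
        rw [h4, powRed p n hn hcardp (t * (w + 2 * i)) c]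
        have h5 : n = t * (2 * w) := by rw [hnmw, hmt]; ring
        rw [h5, Nat.mul_mod_mul_left]
      rw [mul_pow, hgoal]
    have hT : ∀ c : K, traceMul q w α c =
        ∑ i ∈ Finset.range w, α ^ q ^ i * c ^ p ^ (t * (2 * i)) := by
      intro c
      unfold traceMul
      apply Finset.sum_congr rfl
      intro i hi
      have h4 : q ^ i = p ^ (t * (2 * i)) := by
        rw [hqm, ← pow_mul, hmt]
        congr 1
        ring
      rw [mul_pow, h4]
    have hsum : ∀ c : K, ∑ i ∈ Finset.range (w + w), cc i * c ^ ee i = 0 := by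
      intro c
      rw [Finset.sum_range_add]
      have h1 : ∑ i ∈ Finset.range w, cc i * c ^ ee i = traceMul q w α (σ c) := by
        rw [hTσ]
        apply Finset.sum_congr rfl
        intro i hi
        have hi' : i < w := Finset.mem_range.mp hi
        simp only [hcc, hee, huu, if_pos hi']
      have h2 : ∑ i ∈ Finset.range w, cc (w + i) * c ^ ee (w + i) = δ * traceMul q w α c := by
        rw [hT, Finset.mul_sum]
        apply Finset.sum_congr rfl
        intro i hi
        simp only [hcc, hee, huu, if_neg (by omega : ¬ (w + i < w)),
          Nat.add_sub_cancel_left]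
        ring
      rw [h1, h2]
      exact hδ c
    have hvan := polyVanish (w + w) cc ee
      (by
        intro i hi k hk hik
        simp only [hee] at hik
        have h1 := Nat.pow_right_injective hp.two_le hik
        have h2 : uu i = uu k := by
          have := Nat.eq_of_mul_eq_mul_left (by omega : 0 < t) h1
          exact this
        exact huinj i hi k hk h2)
      (by
        intro i hi
        simp only [hee]
        rw [hcardp]
        apply Nat.pow_lt_pow_right hp.one_lt
        have := huub i hi
        calc t * uu i < t * (2 * w) := by
              exact mul_lt_mul_of_pos_left this (by omega : 0 < t)
        _ = n := by rw [hnmw, hmt]; ring)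
      hsum
    have h0 := hvan 0 (by omega)
    simp only [hcc, if_pos hwpos, pow_zero, pow_one] at h0
    exact hα h0
  -- first iff
  have iff1 : (∀ v u : V, traceMul q w α (β u v) = σ (traceMul q w α (β v u))) ↔ σ α = α := by
    constructor
    · intro hherm
      have hall : ∀ d : K, traceMul q w α d = traceMul q w (σ α) d := by
        intro d
        obtain ⟨v, u, hvu⟩ := hsurjβ (σ d)
        have h1 := hherm v u
        rw [hβherm v u, hvu, hσ2 d, hTσcomp, hσ2 d] at h1
        exact h1
      have hsum : ∀ x : K, ∑ i ∈ Finset.range w, (α ^ q ^ i - (σ α) ^ q ^ i) * x ^ q ^ i = 0 := by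
        intro x
        have h1 := hall x
        unfold traceMul at h1
        simp only [sub_mul, ← mul_pow]
        rw [Finset.sum_sub_distrib, h1, sub_self]
      have hvan := polyVanish w _ _
        (by
          intro i hi k hk hik
          exact Nat.pow_right_injective hq2 hik)
        (by
          intro i hi
          rw [hcardK]
          exact Nat.pow_lt_pow_right (by omega) hi)
        hsum
      have h0 := hvan 0 hwpos
      rw [pow_zero, pow_one, pow_one, sub_eq_zero] at h0
      exact h0.symm
    · intro hσα v u
      rw [hβherm v u, hTσcomp, hσα]
  refine ⟨iff1, ?_, ?_⟩
  · rintro ⟨-, -, hh⟩ hσα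
    exact hh (iff1.mpr hσα)
  · intro hne
    refine ⟨?_, ?_, fun hh => hne (iff1.mp hh)⟩
    · intro hsym
      apply key (-1)
      intro c
      obtain ⟨v, u, hvu⟩ := hsurjβ c
      have h1 := hsym v u
      rw [hβherm v u, hvu] at h1
      rw [h1]
      ring
    · intro halt
      apply key 1
      intro c
      obtain ⟨v, u, hvu⟩ := hsurjβ c
      have hexp : β (u + v) (u + v) = β u u + (β u v + (β v u + β v v)) := by
        rw [hβadd₁, hβadd₂, hβadd₂]
        ring
      have h1 := halt (u + v)
      rw [hexp, hTadd, hTadd, hTadd, halt u, halt v, hβherm v u, hvu] at h1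
      linear_combination h1
end

section
/- Let q be a prime power, w even, K = GF(q^w), and σ(x) = x^{q^{w/2}} the order-2 automorphism of K, which fixes GF(q) pointwise. Let V be a vector space over K, β : V×V → K a nonzero hermitian form with respect to σ, α ∈ K^*, and L : K → GF(q) the GF(q)-linear map L(x) = Tr_{K/GF(q)}(αx), so that Lβ = L∘β is a GF(q)-bilinear form on V regarded as a GF(q)-vector space. Then: (1) Lβ is symmetric if and only if σ(α) = α; (2) Lβ is alternating if and only if σ(α) = −α; (3) Lβ is neither symmetric nor alternating if and only if σ(α) ≠ α and σ(α) ≠ −α. -/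
/-- The absolute trace-like map `x ↦ Σ_{i<w} x^{q^i}`. -/
def auxT {K : Type*} [Field K] (q w : ℕ) (x : K) : K :=
  ∑ i ∈ Finset.range w, x ^ q ^ i

lemma auxT_add {K : Type*} [Field K] {q w : ℕ}
    (hqadd : ∀ (x y : K) (i : ℕ), (x + y) ^ q ^ i = x ^ q ^ i + y ^ q ^ i) (x y : K) :
    auxT q w (x + y) = auxT q w x + auxT q w y := by
  unfold auxT
  rw [← Finset.sum_add_distrib]
  exact Finset.sum_congr rfl fun i _ => hqadd x y i

lemma auxT_frob {K : Type*} [Field K] {q w : ℕ}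
    (hpow : ∀ x : K, x ^ q ^ w = x) (x : K) :
    auxT q w (x ^ q) = auxT q w x := by
  unfold auxT
  have h : ∀ i, (x ^ q) ^ q ^ i = x ^ q ^ (i + 1) := fun i => by
    rw [← pow_mul, ← pow_succ']
  calc ∑ i ∈ Finset.range w, (x ^ q) ^ q ^ i
      = ∑ i ∈ Finset.range w, x ^ q ^ (i + 1) :=
        Finset.sum_congr rfl fun i _ => h i
    _ = ∑ i ∈ Finset.range w, x ^ q ^ i := by
        have hs := Finset.sum_range_succ' (fun i => x ^ q ^ i) w
        have hs2 := Finset.sum_range_succ (fun i => x ^ q ^ i) w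
        rw [hs2, hpow x, pow_zero, pow_one] at hs
        exact (add_right_cancel hs).symm

lemma auxT_frob_pow {K : Type*} [Field K] {q w : ℕ}
    (hpow : ∀ x : K, x ^ q ^ w = x) (x : K) (n : ℕ) :
    auxT q w (x ^ q ^ n) = auxT q w x := by
  induction n with
  | zero => simp
  | succ n ih =>
    have h : x ^ q ^ (n + 1) = (x ^ q ^ n) ^ q := by rw [← pow_mul, pow_succ]
    rw [h, auxT_frob hpow, ih]

lemma auxT_split {K : Type*} [Field K] {q w m : ℕ}
    (hqadd : ∀ (x y : K) (i : ℕ), (x + y) ^ q ^ i = x ^ q ^ i + y ^ q ^ i)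
    (hw : w = 2 * m) (x : K) :
    auxT q w x = ∑ i ∈ Finset.range m, (x + x ^ q ^ m) ^ q ^ i := by
  subst hw
  unfold auxT
  have h1 : ∀ i, (x + x ^ q ^ m) ^ q ^ i = x ^ q ^ i + x ^ q ^ (m + i) := by
    intro i
    rw [hqadd, ← pow_mul, ← pow_add]
  calc ∑ i ∈ Finset.range (2 * m), x ^ q ^ i
      = ∑ i ∈ Finset.range m, x ^ q ^ i + ∑ i ∈ Finset.range m, x ^ q ^ (m + i) := by
        rw [two_mul, Finset.sum_range_add]
    _ = ∑ i ∈ Finset.range m, (x + x ^ q ^ m) ^ q ^ i := by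
        rw [← Finset.sum_add_distrib]
        exact Finset.sum_congr rfl fun i _ => (h1 i).symm

lemma auxT_ne {K : Type*} [Field K] [Fintype K] {q w : ℕ} (hq2 : 2 ≤ q) (hw1 : 0 < w)
    (hcard : Fintype.card K = q ^ w) : ∃ y : K, auxT q w y ≠ 0 := by
  set P : Polynomial K := ∑ i ∈ Finset.range w, Polynomial.X ^ q ^ i with hP
  have hinj : Function.Injective (q ^ ·) := Nat.pow_right_injective hq2
  have hPne : P ≠ 0 := by
    intro h
    have hc : P.coeff (q ^ (w - 1)) = 1 := by
      rw [hP, Polynomial.finset_sum_coeff]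
      rw [Finset.sum_eq_single (w - 1)]
      · simp [Polynomial.coeff_X_pow]
      · intro i _ hne
        simp only [Polynomial.coeff_X_pow]
        exact if_neg fun he => hne (hinj he.symm)
      · intro hmem
        exact absurd (Finset.mem_range.2 (by omega)) hmem
    rw [h] at hc
    simp at hc
  have hdeg : P.natDegree < Fintype.card K := by
    rw [hcard]
    refine lt_of_le_of_lt (Polynomial.natDegree_sum_le_of_forall_le (n := q ^ (w - 1)) _ _ ?_) ?_
    · intro i hi
      rw [Polynomial.natDegree_X_pow]
      exact Nat.pow_le_pow_right (by omega) (by have := Finset.mem_range.1 hi; omega)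
    · exact Nat.pow_lt_pow_right (by omega) (by omega)
  obtain ⟨y, hy⟩ := Polynomial.exists_eval_ne_zero_of_natDegree_lt_card P hPne
    (by rw [Cardinal.mk_fintype]; exact_mod_cast hdeg)
  refine ⟨y, ?_⟩
  have he : P.eval y = auxT q w y := by
    simp [hP, auxT, Polynomial.eval_finset_sum]
  rwa [he] at hy

/-- Let `q` be a prime power, `w = 2m` even, `K = GF(q^w)`, and
`σ(x) = x^{q^{w/2}}` the order-`2` automorphism of `K`, which fixes `GF(q)` pointwise.
Let `V` be a vector space over `K`, `β : V × V → K` a nonzero hermitian form with respect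
to `σ`, `α ∈ K*`, and `L : K → GF(q)` the `GF(q)`-linear map `L(x) = Tr_{K/GF(q)}(αx)`,
so that `Lβ = L ∘ β` is a `GF(q)`-bilinear form on `V` regarded as a `GF(q)`-vector
space.  Then:
(1) `Lβ` is symmetric if and only if `σ(α) = α`;
(2) `Lβ` is alternating if and only if `σ(α) = −α`;
(3) `Lβ` is neither symmetric nor alternating if and only if `σ(α) ≠ α` and
`σ(α) ≠ −α`. -/
theorem stmt_16 {K : Type*} [Field K] [Fintype K]
    (q w m : ℕ) (hw : w = 2 * m) (hm : 0 < m)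
    (hcardK : Fintype.card K = q ^ w)
    {V : Type*} [AddCommGroup V] [Module K V]
    (β : V → V → K)
    (hβadd₁ : ∀ u v w : V, β (u + v) w = β u w + β v w)
    (hβadd₂ : ∀ u v w : V, β u (v + w) = β u v + β u w)
    (hβsmul₁ : ∀ (a : K) (v w : V), β (a • v) w = a * β v w)
    (hβsmul₂ : ∀ (a : K) (v w : V), β v (a • w) = a ^ q ^ m * β v w)
    (hβherm : ∀ v w : V, β w v = (β v w) ^ q ^ m)
    (hβne : ∃ v w : V, β v w ≠ 0)
    (α : K) (hα : α ≠ 0) :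
    ((∀ v u : V, traceMul q w α (β v u) = traceMul q w α (β u v)) ↔ α ^ q ^ m = α) ∧
    ((∀ v : V, traceMul q w α (β v v) = 0) ↔ α ^ q ^ m = -α) ∧
    ((¬ (∀ v u : V, traceMul q w α (β v u) = traceMul q w α (β u v)) ∧
      ¬ (∀ v : V, traceMul q w α (β v v) = 0)) ↔
      (α ^ q ^ m ≠ α ∧ α ^ q ^ m ≠ -α)) := by
  have hw1 : 0 < w := by omega
  have hq2 : 2 ≤ q := by
    by_contra h
    have hcle : q ^ w ≤ 1 := by
      calc q ^ w ≤ 1 ^ w := Nat.pow_le_pow_left (by omega) w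
        _ = 1 := one_pow w
    have h1 := Fintype.one_lt_card (α := K)
    rw [hcardK] at h1
    omega
  -- characteristic
  haveI : CharP K (ringChar K) := ringChar.charP K
  obtain ⟨n, hpprime, hcard'⟩ := FiniteField.card K (ringChar K)
  haveI : Fact (ringChar K).Prime := ⟨hpprime⟩
  have hqdvd : q ∣ ringChar K ^ (n : ℕ) := by
    have hd : q ∣ q ^ w := dvd_pow_self q hw1.ne'
    rwa [← hcardK, hcard'] at hd
  obtain ⟨k, -, hqpk⟩ := (Nat.dvd_prime_pow hpprime).1 hqdvd
  have hqadd : ∀ (x y : K) (i : ℕ), (x + y) ^ q ^ i = x ^ q ^ i + y ^ q ^ i := by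
    intro x y i
    have e : q ^ i = ringChar K ^ (k * i) := by rw [hqpk, ← pow_mul]
    rw [e]
    exact add_pow_char_pow x y (ringChar K) (k * i)
  have hpowK : ∀ x : K, x ^ q ^ w = x := by
    intro x
    rw [← hcardK]
    exact FiniteField.pow_card x
  -- nonzero value of β and surjectivity
  obtain ⟨v₀, w₀, hb0⟩ := hβne
  have hsurj : ∀ x : K, β ((x / β v₀ w₀) • v₀) w₀ = x := by
    intro x
    rw [hβsmul₁, div_mul_cancel₀ _ hb0]
  obtain ⟨y, hy⟩ := auxT_ne hq2 hw1 hcardK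
  have hker : ∀ c : K, (∀ x : K, auxT q w (c * x) = 0) → c = 0 := by
    intro c hc
    by_contra hcne
    have h := hc (c⁻¹ * y)
    rw [← mul_assoc, mul_inv_cancel₀ hcne, one_mul] at h
    exact hy h
  have hswap : ∀ a x : K, auxT q w (a * x ^ q ^ m) = auxT q w (a ^ q ^ m * x) := by
    intro a x
    have h1 := auxT_frob_pow hpowK (a * x ^ q ^ m) m
    rw [mul_pow, ← pow_mul, ← pow_add, ← two_mul, ← hw, hpowK x] at h1
    exact h1.symm
  have hTab : ∀ b : K, traceMul q w α b = auxT q w (α * b) := fun _ => rfl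
  let Thom : K →+ K := AddMonoidHom.mk' (auxT q w) (auxT_add hqadd)
  have hThom : ∀ x : K, Thom x = auxT q w x := fun _ => rfl
  -- Part 1
  have part1 : (∀ v u : V, traceMul q w α (β v u) = traceMul q w α (β u v)) ↔
      α ^ q ^ m = α := by
    constructor
    · intro hsym
      have key : ∀ x : K, auxT q w ((α - α ^ q ^ m) * x) = 0 := by
        intro x
        have e1 : β ((x / β v₀ w₀) • v₀) w₀ = x := hsurj x
        have e2 : β w₀ ((x / β v₀ w₀) • v₀) = x ^ q ^ m := by
          rw [hβherm, e1]
        have h := hsym ((x / β v₀ w₀) • v₀) w₀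
        rw [hTab, hTab, e1, e2, hswap] at h
        calc auxT q w ((α - α ^ q ^ m) * x)
            = Thom (α * x - α ^ q ^ m * x) := by rw [sub_mul]; rfl
          _ = Thom (α * x) - Thom (α ^ q ^ m * x) := map_sub Thom _ _
          _ = 0 := by rw [hThom, hThom, h, sub_self]
      have hc := hker _ key
      exact (sub_eq_zero.1 hc).symm
    · intro hfix v u
      rw [hTab, hTab, hβherm v u, hswap, hfix]
  -- Part 2
  have part2 : (∀ v : V, traceMul q w α (β v v) = 0) ↔ α ^ q ^ m = -α := by
    constructor
    · intro halt
      have key : ∀ x : K, auxT q w ((α + α ^ q ^ m) * x) = 0 := by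
        intro x
        set u : V := (x / β v₀ w₀) • v₀ with hu_def
        have hu : β u w₀ = x := hsurj x
        have hwu : β w₀ u = x ^ q ^ m := by rw [hβherm, hu]
        have h := halt (u + w₀)
        have h1 := halt u
        have h2 := halt w₀
        rw [hTab] at h h1 h2
        have hexp2 : α * β (u + w₀) (u + w₀)
            = α * β u u + (α * x + (α * x ^ q ^ m + α * β w₀ w₀)) := by
          rw [hβadd₁, hβadd₂, hβadd₂, hu, hwu]
          ring
        rw [hexp2, auxT_add hqadd, auxT_add hqadd, auxT_add hqadd, h1, h2, hswap] at h
        rw [add_mul, auxT_add hqadd]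
        linear_combination h
      have hc := hker _ key
      exact eq_neg_of_add_eq_zero_right hc
    · intro hneg v
      have hc : (β v v) ^ q ^ m = β v v := (hβherm v v).symm
      rw [hTab, auxT_split hqadd hw]
      have hz : α * β v v + (α * β v v) ^ q ^ m = 0 := by
        rw [mul_pow, hc, hneg]
        ring
      rw [hz]
      refine Finset.sum_eq_zero fun i _ => ?_
      exact zero_pow (Nat.pow_pos (by omega : 0 < q)).ne'
  exact ⟨part1, part2, and_congr part1.not part2.not⟩
end
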